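/- arXiv:2409.12343 — 9 statements merged into one kernel-verified Lean document; each statement's English description precedes it below -/
import Mathlib

section
/- Let f, h be continuously differentiable convex functions on ℝⁿ. Then L·h − f is convex if and only if for all x, y: f(y) ≤ f(x) + ⟨∇f(x), y−x⟩ + L·D_h(y,x), where D_h(y,x) = h(y) − h(x) − ⟨∇h(x), y−x⟩. -/
open scoped RealInnerProductSpace

section Aux

variable {E : Type*} [NormedAddCommGroup E] [InnerProductSpace ℝ E] [CompleteSpace E]

lemma inner_gradient_eq_fderiv (f : E → ℝ) (x v : E) :
    ⟪gradient f x, v⟫ = fderiv ℝ f x v := by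
  rw [gradient, InnerProductSpace.toDual_symm_apply]

lemma convexOn_tangent_le (g : E → ℝ) (hg : Differentiable ℝ g)
    (hconv : ConvexOn ℝ Set.univ g) (x y : E) :
    fderiv ℝ g x (y - x) ≤ g y - g x := by
  set A : ℝ →ᵃ[ℝ] E := AffineMap.lineMap x y with hA
  have hAval : ∀ t : ℝ, A t = x + t • (y - x) := by
    intro t
    simp [hA, AffineMap.lineMap_apply, vsub_eq_sub, vadd_eq_add]
    abel
  have hφconv : ConvexOn ℝ (A ⁻¹' Set.univ) (g ∘ A) := hconv.comp_affineMap A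
  have hφconv' : ConvexOn ℝ Set.univ (g ∘ A) := by simpa using hφconv
  have hline : HasDerivAt (fun t : ℝ => x + t • (y - x)) (y - x) (0 : ℝ) := by
    have h1 : HasDerivAt (fun t : ℝ => t • (y - x)) ((1 : ℝ) • (y - x)) (0 : ℝ) :=
      (hasDerivAt_id (0 : ℝ)).smul_const (y - x)
    simpa using h1.const_add x
  have hφderiv : HasDerivAt (g ∘ A) (fderiv ℝ g x (y - x)) 0 := by
    have hgx : HasFDerivAt g (fderiv ℝ g x) (x + (0 : ℝ) • (y - x)) := by
      simpa using (hg x).hasFDerivAt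
    have h2 := hgx.comp_hasDerivAt (0 : ℝ) hline
    have heq : (g ∘ fun t : ℝ => x + t • (y - x)) = g ∘ A := by
      funext t; simp [Function.comp, hAval t]
    rwa [heq] at h2
  have hslope := hφconv'.le_slope_of_hasDerivAt (Set.mem_univ (0 : ℝ))
    (Set.mem_univ (1 : ℝ)) one_pos hφderiv
  have hA0 : A 0 = x := by rw [hAval]; simp
  have hA1 : A 1 = y := by rw [hAval]; simp
  simpa [slope, Function.comp, hA0, hA1] using hslope

end Aux

/-- For continuously differentiable convex `f, h` and `L > 0`,
`L·h − f` is convex iff the Bregman descent inequality holds, where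
`D_h(y,x) = h y − h x − ⟪∇h x, y − x⟫`. -/
theorem relative_smoothness_iff_bregman_descent {n : ℕ}
    (f h : EuclideanSpace ℝ (Fin n) → ℝ)
    (hf : ContDiff ℝ 1 f) (hh : ContDiff ℝ 1 h)
    (hfconv : ConvexOn ℝ Set.univ f) (hhconv : ConvexOn ℝ Set.univ h)
    (L : ℝ) (hL : 0 < L) :
    ConvexOn ℝ Set.univ (fun x => L * h x - f x) ↔
      (∀ x y, f y ≤ f x + ⟪gradient f x, y - x⟫ +
        L * (h y - h x - ⟪gradient h x, y - x⟫)) := by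
  have hfd : Differentiable ℝ f := hf.differentiable one_ne_zero
  have hhd : Differentiable ℝ h := hh.differentiable one_ne_zero
  have hgd : Differentiable ℝ (fun x => L * h x - f x) :=
    (hhd.const_mul L).sub hfd
  constructor
  · intro hconv x y
    have key := convexOn_tangent_le (fun x => L * h x - f x) hgd hconv x y
    have hfder : fderiv ℝ (fun x => L * h x - f x) x (y - x)
        = L * fderiv ℝ h x (y - x) - fderiv ℝ f x (y - x) := by
      rw [fderiv_fun_sub ((hhd x).const_mul L) (hfd x), fderiv_const_mul (hhd x)]
      simp
    rw [hfder] at key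
    rw [inner_gradient_eq_fderiv, inner_gradient_eq_fderiv]
    linarith
  · intro H
    refine ⟨convex_univ, ?_⟩
    intro x _ y _ a b ha hb hab
    set z := a • x + b • y with hz
    have hzero : a • (x - z) + b • (y - z) = 0 := by
      have e : a • (x - z) + b • (y - z) = (a • x + b • y) - (a + b) • z := by
        rw [smul_sub, smul_sub, add_smul]; abel
      rw [e, hab, one_smul, hz, sub_self]
    have innerzero : ∀ v : EuclideanSpace ℝ (Fin n),
        a * ⟪v, x - z⟫ + b * ⟪v, y - z⟫ = 0 := by
      intro v
      have : ⟪v, a • (x - z) + b • (y - z)⟫ = (0 : ℝ) := by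
        rw [hzero, inner_zero_right]
      rw [inner_add_right, real_inner_smul_right, real_inner_smul_right] at this
      exact this
    have hx := H z x
    have hy := H z y
    have hif := innerzero (gradient f z)
    have hih := innerzero (gradient h z)
    have hau := mul_le_mul_of_nonneg_left hx ha
    have hbv := mul_le_mul_of_nonneg_left hy hb
    have e1 : a * (L * h z) + b * (L * h z) = L * h z := by
      rw [← add_mul, hab, one_mul]
    have e2 : a * f z + b * f z = f z := by rw [← add_mul, hab, one_mul]
    have hih' : L * (a * ⟪gradient h z, x - z⟫ + b * ⟪gradient h z, y - z⟫) = 0 := by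
      rw [hih, mul_zero]
    simp only [smul_eq_mul]
    nlinarith [hau, hbv, e1, e2, hif, hih']
end

section
/- Let f be L_f-smooth and let x* be a global minimizer of f over the set C_s = {x : ‖x‖₀ ≤ s}. Then x* belongs to the set of projections P_{C_s}(x* − (1/L_f)∇f(x*)), where P_{C_s}(y) is the set of minimizers of ‖z − y‖² over z ∈ C_s. -/
open scoped RealInnerProductSpace

/-- The set of `s`-sparse vectors in `ℝⁿ`. -/
def sparseSet (n s : ℕ) : Set (EuclideanSpace ℝ (Fin n)) :=
  {x | (Finset.univ.filter fun i => x i ≠ 0).card ≤ s}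

/-- The (set-valued) Euclidean projection onto the `s`-sparse vectors. -/
def sparseProj (n s : ℕ) (y : EuclideanSpace ℝ (Fin n)) : Set (EuclideanSpace ℝ (Fin n)) :=
  {z | z ∈ sparseSet n s ∧ ∀ w ∈ sparseSet n s, ‖z - y‖ ≤ ‖w - y‖}

/-- The descent lemma for functions with Lipschitz gradient. -/
lemma descent_lemma {n : ℕ} (f : EuclideanSpace ℝ (Fin n) → ℝ) (hf : ContDiff ℝ 1 f)
    (Lf : ℝ)
    (hlip : ∀ x y, ‖gradient f x - gradient f y‖ ≤ Lf * ‖x - y‖)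
    (xs w : EuclideanSpace ℝ (Fin n)) :
    f w ≤ f xs + ⟪gradient f xs, w - xs⟫ + Lf / 2 * ‖w - xs‖ ^ 2 := by
  have hdiff : Differentiable ℝ f := hf.differentiable one_ne_zero
  set d := w - xs with hd
  set g := gradient f xs with hg
  have hline : ∀ t : ℝ, HasDerivAt (fun t : ℝ => xs + t • d) d t := fun t => by
    simpa using ((hasDerivAt_id t).smul_const d).const_add xs
  have hφ : ∀ t : ℝ, HasDerivAt (fun t : ℝ => f (xs + t • d))
      ⟪gradient f (xs + t • d), d⟫ t := fun t => by
    have h1 := (hdiff (xs + t • d)).hasGradientAt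
    have h2 : HasFDerivAt f ((InnerProductSpace.toDual ℝ _) (gradient f (xs + t • d)))
        (xs + t • d) := h1
    exact h2.comp_hasDerivAt t (hline t)
  set h : ℝ → ℝ := fun t => f (xs + t • d) - t * ⟪g, d⟫ - Lf / 2 * t ^ 2 * ‖d‖ ^ 2 with hh
  have hh' : ∀ t : ℝ, HasDerivAt h
      (⟪gradient f (xs + t • d), d⟫ - ⟪g, d⟫ - Lf * t * ‖d‖ ^ 2) t := fun t => by
    have := ((hφ t).sub ((hasDerivAt_id t).mul_const ⟪g, d⟫)).sub
      ((((hasDerivAt_pow 2 t).const_mul (Lf / 2)).mul_const (‖d‖ ^ 2)))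
    exact this.congr_deriv (by rw [show (2:ℕ) - 1 = 1 from rfl]; push_cast; ring)
  have hanti : AntitoneOn h (Set.Icc 0 1) := by
    apply antitoneOn_of_deriv_nonpos (convex_Icc 0 1)
    · exact fun t _ => ((hh' t).differentiableAt).continuousAt.continuousWithinAt
    · intro t _; exact ((hh' t).differentiableAt).differentiableWithinAt
    · intro t ht
      rw [(hh' t).deriv]
      have ht0 : 0 ≤ t := (le_of_lt (Set.mem_Ioo.mp (by simpa using ht)).1)
      have hb : ⟪gradient f (xs + t • d), d⟫ - ⟪g, d⟫ ≤ Lf * t * ‖d‖ ^ 2 := by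
        have := real_inner_le_norm (gradient f (xs + t • d) - g) d
        rw [inner_sub_left] at this
        calc ⟪gradient f (xs + t • d), d⟫ - ⟪g, d⟫
            ≤ ‖gradient f (xs + t • d) - g‖ * ‖d‖ := this
          _ ≤ (Lf * ‖(xs + t • d) - xs‖) * ‖d‖ := by
              apply mul_le_mul_of_nonneg_right _ (norm_nonneg d)
              exact hlip _ _
          _ = Lf * t * ‖d‖ ^ 2 := by
              simp [norm_smul, abs_of_nonneg ht0]; ring
      linarith
  have key := hanti (Set.mem_Icc.mpr ⟨le_rfl, zero_le_one⟩)
    (Set.mem_Icc.mpr ⟨zero_le_one, le_rfl⟩) zero_le_one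
  simp only [hh] at key
  have e0 : xs + (0:ℝ) • d = xs := by simp
  have e1 : xs + (1:ℝ) • d = w := by simp [hd]
  rw [e0, e1] at key
  simp only [hg] at key ⊢
  nlinarith [key]

/-- (L-stationarity) If `f` has `L_f`-Lipschitz gradient and `x*` is a global
minimizer of `f` over the `s`-sparse set, then
`x* ∈ P_{C_s}(x* − (1/L_f)∇f(x*))`. -/
theorem L_stationarity {n s : ℕ} (hs : 1 ≤ s)
    (f : EuclideanSpace ℝ (Fin n) → ℝ) (hf : ContDiff ℝ 1 f)
    (Lf : ℝ) (hLf : 0 < Lf)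
    (hlip : ∀ x y, ‖gradient f x - gradient f y‖ ≤ Lf * ‖x - y‖)
    (xs : EuclideanSpace ℝ (Fin n)) (hxs : xs ∈ sparseSet n s)
    (hmin : ∀ y ∈ sparseSet n s, f xs ≤ f y) :
    xs ∈ sparseProj n s (xs - (1 / Lf) • gradient f xs) := by
  refine ⟨hxs, fun w hw => ?_⟩
  set g := gradient f xs with hg
  have hk : 0 ≤ ⟪g, w - xs⟫ + Lf / 2 * ‖w - xs‖ ^ 2 := by
    have h1 := descent_lemma f hf Lf hlip xs w
    have h2 := hmin w hw
    linarith
  -- now compare squared norms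
  have hxy : xs - (xs - (1 / Lf) • g) = (1 / Lf) • g := by abel
  have hwy : w - (xs - (1 / Lf) • g) = (w - xs) + (1 / Lf) • g := by abel
  rw [hxy, hwy]
  have hsq : ‖(1 / Lf) • g‖ ^ 2 ≤ ‖(w - xs) + (1 / Lf) • g‖ ^ 2 := by
    rw [norm_add_sq_real]
    have hin : ⟪w - xs, (1 / Lf) • g⟫ = (1 / Lf) * ⟪g, w - xs⟫ := by
      rw [real_inner_smul_right, real_inner_comm]
    rw [hin]
    have hLf' : 0 < 1 / Lf := by positivity
    have hc : (1 / Lf) * Lf = 1 := one_div_mul_cancel (ne_of_gt hLf)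
    nlinarith [norm_nonneg (w - xs), mul_le_mul_of_nonneg_left hk (le_of_lt hLf')]
  have := Real.sqrt_le_sqrt hsq
  rwa [Real.sqrt_sq (norm_nonneg _), Real.sqrt_sq (norm_nonneg _)] at this
end

section
/- Let h be strictly convex and continuously differentiable, let f be L_h-smooth relative to h (i.e. L_h·h − f is convex), and let L > L_h. If x* is a global minimizer of f over C_s, then x* is the unique minimizer over y ∈ C_s of ⟨∇f(x*), y − x*⟩ + L·D_h(y, x*). -/
open scoped RealInnerProductSpace

section Aux
variable {E : Type*} [NormedAddCommGroup E] [InnerProductSpace ℝ E] [CompleteSpace E]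

lemma grad_ineq {g : E → ℝ} (hg : ConvexOn ℝ Set.univ g) {x g' : E}
    (hd : HasGradientAt g g' x) (y : E) : g x + ⟪g', y - x⟫ ≤ g y := by
  set φ : ℝ → ℝ := fun t => g (t • (y - x) + x) with hφ
  have hφconv : ConvexOn ℝ Set.univ φ := by
    have := hg.comp_affineMap (AffineMap.lineMap x y : ℝ →ᵃ[ℝ] E)
    have e : φ = g ∘ ⇑(AffineMap.lineMap x y : ℝ →ᵃ[ℝ] E) := by
      funext t; rfl
    rw [e]; exact this
  have hline : HasDerivAt (fun t : ℝ => t • (y - x) + x) (y - x) (0 : ℝ) := by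
    simpa using ((hasDerivAt_id (0:ℝ)).smul_const (y - x)).add_const x
  have hF : HasFDerivAt g (innerSL ℝ g') ((0:ℝ) • (y - x) + x) := by
    rw [zero_smul, zero_add]
    exact (hasGradientAt_iff_hasFDerivAt.mp hd).congr_fderiv (by ext v; simp)
  have hder : HasDerivAt φ ⟪g', y - x⟫ 0 := by
    exact hF.comp_hasDerivAt (0:ℝ) hline
  have := hφconv.le_slope_of_hasDerivAt (Set.mem_univ (0:ℝ)) (Set.mem_univ (1:ℝ))
    one_pos hder
  have hs : slope φ 0 1 = g y - g x := by simp [slope, φ]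
  rw [hs] at this
  linarith

lemma grad_ineq_strict {g : E → ℝ} (hg : StrictConvexOn ℝ Set.univ g) {x g' : E}
    (hd : HasGradientAt g g' x) {y : E} (hxy : y ≠ x) : g x + ⟪g', y - x⟫ < g y := by
  have hm := hg.2 (Set.mem_univ x) (Set.mem_univ y) (Ne.symm hxy)
    (by norm_num : (0:ℝ) < 1/2) (by norm_num : (0:ℝ) < 1/2) (by norm_num)
  have h1 := grad_ineq hg.convexOn hd ((1/2 : ℝ) • x + (1/2 : ℝ) • y)
  have hi : ⟪g', ((1/2 : ℝ) • x + (1/2 : ℝ) • y) - x⟫ = (1/2 : ℝ) * ⟪g', y - x⟫ := by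
    rw [show ((1/2 : ℝ) • x + (1/2 : ℝ) • y) - x = (1/2 : ℝ) • (y - x) by
      simp [smul_sub]; module]
    exact real_inner_smul_right _ _ _
  rw [hi] at h1
  simp only [smul_eq_mul] at hm
  linarith
end Aux

/-- (Bregman stationarity) If `h` is strictly convex, `f` is `L_h`-smooth
relative to `h` and `L > L_h`, then any global minimizer `x*` of `f` over `C_s` is the
unique minimizer over `y ∈ C_s` of `⟪∇f(x*), y − x*⟫ + L·D_h(y, x*)`. -/
theorem bregman_stationarity {n s : ℕ}
    (f h : EuclideanSpace ℝ (Fin n) → ℝ)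
    (hf : ContDiff ℝ 1 f) (hh : ContDiff ℝ 1 h)
    (hconv : StrictConvexOn ℝ Set.univ h)
    (Lh L : ℝ) (hLh : 0 < Lh) (hL : Lh < L)
    (hrel : ConvexOn ℝ Set.univ (fun x => Lh * h x - f x))
    (xs : EuclideanSpace ℝ (Fin n)) (hxs : xs ∈ sparseSet n s)
    (hmin : ∀ y ∈ sparseSet n s, f xs ≤ f y) :
    (∀ y ∈ sparseSet n s,
        ⟪gradient f xs, xs - xs⟫ + L * (h xs - h xs - ⟪gradient h xs, xs - xs⟫) ≤
        ⟪gradient f xs, y - xs⟫ + L * (h y - h xs - ⟪gradient h xs, y - xs⟫)) ∧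
    (∀ y ∈ sparseSet n s, y ≠ xs →
        ⟪gradient f xs, xs - xs⟫ + L * (h xs - h xs - ⟪gradient h xs, xs - xs⟫) <
        ⟪gradient f xs, y - xs⟫ + L * (h y - h xs - ⟪gradient h xs, y - xs⟫)) := by
  have hfd := (hf.differentiable one_ne_zero xs).hasGradientAt
  have hhd := (hh.differentiable one_ne_zero xs).hasGradientAt
  have hgd : HasGradientAt (fun x => Lh * h x - f x)
      (Lh • gradient h xs - gradient f xs) xs := by
    rw [hasGradientAt_iff_hasFDerivAt]
    have Hh := hasGradientAt_iff_hasFDerivAt.mp hhd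
    have Hf := hasGradientAt_iff_hasFDerivAt.mp hfd
    have H := (Hh.const_mul Lh).sub Hf
    exact H.congr_fderiv (by ext v; simp [inner_sub_left, real_inner_smul_left])
  have key : ∀ y, f y ≤ f xs + ⟪gradient f xs, y - xs⟫ +
      Lh * (h y - h xs - ⟪gradient h xs, y - xs⟫) := by
    intro y
    have := grad_ineq hrel hgd y
    simp only [inner_sub_left, real_inner_smul_left] at this
    linarith
  have hD : ∀ y, 0 ≤ h y - h xs - ⟪gradient h xs, y - xs⟫ := fun y => by
    have := grad_ineq hconv.convexOn hhd y; linarith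
  have hDs : ∀ y, y ≠ xs → 0 < h y - h xs - ⟪gradient h xs, y - xs⟫ := fun y hy => by
    have := grad_ineq_strict hconv hhd hy; linarith
  have base : ∀ y ∈ sparseSet n s,
      0 ≤ ⟪gradient f xs, y - xs⟫ + Lh * (h y - h xs - ⟪gradient h xs, y - xs⟫) := by
    intro y hy
    have h1 := hmin y hy
    have h2 := key y
    linarith
  constructor <;> intro y hy
  · have h1 := base y hy
    have h2 := hD y
    simp only [sub_self, inner_zero_right]
    nlinarith
  · intro hyx
    have h1 := base y hy
    have h2 := hDs y hyx
    simp only [sub_self, inner_zero_right]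
    nlinarith
end

section
/- If x is D-stationary for a positive definite diagonal matrix D and ‖x‖₀ < s, then ∇f(x) = 0; in particular, if f is convex, x is a global minimizer of f over ℝⁿ. -/
open scoped RealInnerProductSpace

/-- `x` is `D`-stationary: `D^{1/2} x ∈ P_{C_s}(D^{1/2} x − D^{-1/2} ∇f(x))`. -/
def DStationary {n : ℕ} (s : ℕ) (f : EuclideanSpace ℝ (Fin n) → ℝ)
    (d : Fin n → ℝ) (x : EuclideanSpace ℝ (Fin n)) : Prop :=
  WithLp.toLp 2 (fun i => Real.sqrt (d i) * x i) ∈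
    sparseProj n s (WithLp.toLp 2 fun i => Real.sqrt (d i) * x i - gradient f x i / Real.sqrt (d i))

/-!
If `z` is a Euclidean projection of `y` onto the `s`-sparse vectors and `z` has fewer than `s`
nonzero entries, then overwriting any coordinate `z j` by `y j` gives another `s`-sparse vector,
closer to `y` by `(z j - y j)²`; so `z = y`. Applied to `z = D^{1/2} x` and
`y = D^{1/2} x - D^{-1/2} ∇f(x)` this forces `∇f(x) = 0`, and a differentiable convex function
is minimised wherever its derivative vanishes.
-/

theorem ConvexOn.add_fderiv_le {E : Type*} [NormedAddCommGroup E] [NormedSpace ℝ E]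
    {f : E → ℝ} {f' : E →L[ℝ] ℝ} {x : E} (hconv : ConvexOn ℝ Set.univ f)
    (hf : HasFDerivAt f f' x) (y : E) : f x + f' (y - x) ≤ f y := by
  let ℓ : ℝ →ᵃ[ℝ] E := AffineMap.lineMap x y
  have hline : ConvexOn ℝ Set.univ (f ∘ ℓ) := by
    simpa using hconv.comp_affineMap ℓ
  have hderiv : HasDerivAt (f ∘ ℓ) (f' (y - x)) 0 := by
    have hℓ : HasDerivAt ℓ (y - x) 0 := by
      simpa using AffineMap.hasDerivAt_lineMap (a := x) (b := y) (x := (0 : ℝ))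
    exact (by simpa [ℓ] using hf : HasFDerivAt f f' (ℓ 0)).comp_hasDerivAt 0 hℓ
  have := hline.le_slope_of_hasDerivAt (Set.mem_univ 0) (Set.mem_univ 1) one_pos hderiv
  simp only [slope_def_field, Function.comp_apply, AffineMap.lineMap_apply_one,
    AffineMap.lineMap_apply_zero, sub_zero, div_one, ℓ] at this
  linarith [map_sub f' y x]

theorem EuclideanSpace.norm_sq_update_sub {ι : Type*} [Fintype ι] [DecidableEq ι]
    (v y : EuclideanSpace ℝ ι) (j : ι) :
    ‖WithLp.toLp 2 (Function.update v.ofLp j (y j)) - y‖ ^ 2 = ‖v - y‖ ^ 2 - (v j - y j) ^ 2 := by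
  simp only [EuclideanSpace.real_norm_sq_eq, PiLp.sub_apply]
  rw [← Finset.add_sum_erase _ _ (Finset.mem_univ j), ← Finset.add_sum_erase _ _ (Finset.mem_univ j)]
  rw [Finset.sum_congr rfl fun i hi => by rw [Function.update_of_ne (Finset.ne_of_mem_erase hi)]]
  simp

theorem card_filter_update_ne_zero_le {ι : Type*} [Fintype ι] [DecidableEq ι]
    (v : ι → ℝ) (j : ι) (a : ℝ) :
    (Finset.univ.filter fun i => Function.update v j a i ≠ 0).card ≤
      (Finset.univ.filter fun i => v i ≠ 0).card + 1 := by
  refine (Finset.card_le_card fun i hi => ?_).trans (Finset.card_insert_le j _)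
  by_cases hij : i = j
  · simp [hij]
  · simp_all

theorem eq_of_mem_sparseProj_of_card_lt {n s : ℕ} {y z : EuclideanSpace ℝ (Fin n)}
    (hz : z ∈ sparseProj n s y) (hcard : (Finset.univ.filter fun i => z i ≠ 0).card < s) :
    z = y := by
  ext j
  let w := WithLp.toLp 2 (Function.update z.ofLp j (y j))
  have hw : w ∈ sparseSet n s := (card_filter_update_ne_zero_le z.ofLp j (y j)).trans hcard
  have hle : ‖z - y‖ ^ 2 ≤ ‖w - y‖ ^ 2 := by gcongr; exact hz.2 w hw
  rw [EuclideanSpace.norm_sq_update_sub] at hle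
  nlinarith [sq_nonneg (z j - y j)]

theorem gradient_eq_zero_of_dStationary {n s : ℕ} {f : EuclideanSpace ℝ (Fin n) → ℝ}
    {d : Fin n → ℝ} (hd : ∀ i, 0 < d i) {x : EuclideanSpace ℝ (Fin n)}
    (hcard : (Finset.univ.filter fun i => x i ≠ 0).card < s) (hstat : DStationary s f d x) :
    gradient f x = 0 := by
  have hsqrt (i : Fin n) : Real.sqrt (d i) ≠ 0 := (Real.sqrt_pos.mpr (hd i)).ne'
  have hsupp : (Finset.univ.filter fun i => Real.sqrt (d i) * x i ≠ 0) =
      Finset.univ.filter fun i => x i ≠ 0 :=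
    Finset.filter_congr fun i _ => by simp [hsqrt i]
  have hfixed := eq_of_mem_sparseProj_of_card_lt hstat (hsupp ▸ hcard)
  ext i
  have hi : gradient f x i / Real.sqrt (d i) = 0 := by
    have hcoord := congrArg (· i) hfixed
    dsimp only at hcoord
    linarith
  simpa [hsqrt i] using hi

/-- If `x` is `D`-stationary with `‖x‖₀ < s`, then `∇f(x) = 0`; since `f`
is convex, `x` is a global minimizer of `f` over `ℝⁿ`. -/
theorem DStationary_sparsity_lt_imp_global_min {n s : ℕ}
    (f : EuclideanSpace ℝ (Fin n) → ℝ) (hf : ContDiff ℝ 1 f)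
    (hconv : ConvexOn ℝ Set.univ f)
    (d : Fin n → ℝ) (hd : ∀ i, 0 < d i)
    (x : EuclideanSpace ℝ (Fin n))
    (hcard : (Finset.univ.filter fun i => x i ≠ 0).card < s)
    (hstat : DStationary s f d x) :
    gradient f x = 0 ∧ ∀ y, f x ≤ f y := by
  have hgrad := gradient_eq_zero_of_dStationary hd hcard hstat
  have hderiv : HasFDerivAt f (0 : EuclideanSpace ℝ (Fin n) →L[ℝ] ℝ) x := by
    simpa [hgrad] using (hf.differentiable one_ne_zero x).hasGradientAt.hasFDerivAt
  exact ⟨hgrad, fun y => by simpa using hconv.add_fderiv_le hderiv y⟩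
end

section
/- Any limit point x̄ of the sequence (x_k) generated by IWHT with diagonal D ≻ H (where f is H-smooth and bounded below) is D-stationary: x̄ minimizes over y ∈ C_s the model ⟨∇f(x̄), y − x̄⟩ + (1/2)(y−x̄)ᵀD(y−x̄), up to value 0. -/
open scoped RealInnerProductSpace
open Filter Topology

lemma sparseSet_isClosed (n s : ℕ) : IsClosed (sparseSet n s) := by
  have h : sparseSet n s
      = ⋃ T ∈ {T : Finset (Fin n) | T.card ≤ s},
      {x : EuclideanSpace ℝ (Fin n) | ∀ i ∉ T, x i = 0} := by
    ext x
    simp only [sparseSet, Set.mem_setOf_eq, Set.mem_iUnion, exists_prop]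
    constructor
    · intro hx
      exact ⟨Finset.univ.filter fun i => x i ≠ 0, hx, fun i hi => by
        by_contra h; exact hi (Finset.mem_filter.mpr ⟨Finset.mem_univ i, h⟩)⟩
    · rintro ⟨T, hT, hx⟩
      refine le_trans (Finset.card_le_card ?_) hT
      intro i hi
      rw [Finset.mem_filter] at hi
      by_contra h
      exact hi.2 (hx i h)
  rw [h]
  refine Set.Finite.isClosed_biUnion (Set.toFinite _) fun T _ => ?_
  have h2 : {x : EuclideanSpace ℝ (Fin n) | ∀ i ∉ T, x i = 0} =
      ⋂ (i : Fin n) (_ : i ∉ T), {x : EuclideanSpace ℝ (Fin n) | x i = 0} := by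
    ext x; simp
  rw [h2]
  exact isClosed_iInter fun i => isClosed_iInter fun _ =>
    isClosed_eq (EuclideanSpace.proj (𝕜 := ℝ) i).continuous continuous_const

/-- any limit point of the IWHT sequence is `D`-stationary: no `y ∈ C_s`
gives the quadratic model a strictly negative value. -/
theorem iwht_limit_point_D_stationary {n s : ℕ}
    (f : EuclideanSpace ℝ (Fin n) → ℝ) (hf : ContDiff ℝ 1 f)
    (hbdd : BddBelow (Set.range f))
    (hH d : Fin n → ℝ) (hDH : ∀ i, hH i < d i)
    (hsmooth : ∀ x y : EuclideanSpace ℝ (Fin n),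
      f y ≤ f x + ⟪gradient f x, y - x⟫ + (1 / 2) * ∑ i, hH i * (y i - x i) ^ 2)
    (x : ℕ → EuclideanSpace ℝ (Fin n)) (hsparse : ∀ k, x k ∈ sparseSet n s)
    (hiter : ∀ k, x (k + 1) ∈ sparseSet n s ∧
      ∀ y ∈ sparseSet n s,
        ⟪gradient f (x k), x (k + 1) - x k⟫ +
          (1 / 2) * ∑ i, d i * (x (k + 1) i - x k i) ^ 2 ≤
        ⟪gradient f (x k), y - x k⟫ + (1 / 2) * ∑ i, d i * (y i - x k i) ^ 2)
    (xbar : EuclideanSpace ℝ (Fin n))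
    (hcluster : MapClusterPt xbar Filter.atTop x) :
    xbar ∈ sparseSet n s ∧
      ∀ y ∈ sparseSet n s,
        0 ≤ ⟪gradient f xbar, y - xbar⟫ + (1 / 2) * ∑ i, d i * (y i - xbar i) ^ 2 := by
  -- continuity of the gradient
  have hgradcont : Continuous (gradient f) := by
    have h1 : Continuous (fderiv ℝ f) := hf.continuous_fderiv one_ne_zero
    exact (InnerProductSpace.toDual ℝ _).symm.continuous.comp h1
  -- subsequence converging to xbar
  obtain ⟨φ, hφ, hφtend⟩ :=
    TopologicalSpace.FirstCountableTopology.tendsto_subseq hcluster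
  have hxbar : xbar ∈ sparseSet n s :=
    (sparseSet_isClosed n s).mem_of_tendsto hφtend
      (Filter.Eventually.of_forall fun k => hsparse (φ k))
  -- the model value of the iterate is ≤ 0
  have hmodel : ∀ k, ⟪gradient f (x k), x (k + 1) - x k⟫ +
      (1 / 2) * ∑ i, d i * (x (k + 1) i - x k i) ^ 2 ≤ 0 := by
    intro k
    have h := (hiter k).2 (x k) (hsparse k)
    simpa using h
  -- sufficient decrease
  have key : ∀ k, f (x (k + 1)) +
      (1 / 2) * ∑ i, (d i - hH i) * (x (k + 1) i - x k i) ^ 2 ≤ f (x k) := by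
    intro k
    have h1 := hsmooth (x k) (x (k + 1))
    have h2 := hmodel k
    have h3 : ∑ i, (d i - hH i) * (x (k + 1) i - x k i) ^ 2 =
        ∑ i, d i * (x (k + 1) i - x k i) ^ 2 -
        ∑ i, hH i * (x (k + 1) i - x k i) ^ 2 := by
      rw [← Finset.sum_sub_distrib]
      exact Finset.sum_congr rfl fun i _ => by ring
    rw [h3]
    linarith
  set F : ℕ → ℝ := fun k => f (x k) with hF
  set S : ℕ → ℝ := fun k => ∑ i, (d i - hH i) * (x (k + 1) i - x k i) ^ 2 with hS
  have hSnonneg : ∀ k, 0 ≤ S k := fun k =>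
    Finset.sum_nonneg fun i _ => mul_nonneg (by linarith [hDH i]) (sq_nonneg _)
  have hFanti : Antitone F := by
    apply antitone_nat_of_succ_le
    intro k
    have := key k
    have := hSnonneg k
    simp only [hF, hS] at *
    linarith
  obtain ⟨B, hB⟩ := hbdd
  have hFbdd : BddBelow (Set.range F) := by
    refine ⟨B, ?_⟩
    rintro v ⟨k, rfl⟩
    exact hB (Set.mem_range_self (x k))
  have hFtend : Tendsto F atTop (𝓝 (⨅ k, F k)) := tendsto_atTop_ciInf hFanti hFbdd
  have hFtend1 : Tendsto (fun k => F (k + 1)) atTop (𝓝 (⨅ k, F k)) :=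
    hFtend.comp (tendsto_add_atTop_nat 1)
  have hdiff : Tendsto (fun k => F k - F (k + 1)) atTop (𝓝 0) := by
    have := hFtend.sub hFtend1
    rwa [sub_self] at this
  have hStend : Tendsto S atTop (𝓝 0) := by
    refine squeeze_zero hSnonneg (fun k => ?_) (by simpa using hdiff.const_mul 2)
    have := key k
    simp only [hF, hS] at *
    linarith
  -- coordinatewise squares tend to zero
  have hcoord : ∀ i, Tendsto (fun k => (x (k + 1) i - x k i) ^ 2) atTop (𝓝 0) := by
    intro i
    have hci : (0 : ℝ) < d i - hH i := by linarith [hDH i]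
    have hbound : ∀ k, (d i - hH i) * (x (k + 1) i - x k i) ^ 2 ≤ S k := by
      intro k
      simp only [hS]
      exact Finset.single_le_sum
        (f := fun j => (d j - hH j) * (x (k + 1) j - x k j) ^ 2)
        (fun j _ => mul_nonneg (by linarith [hDH j]) (sq_nonneg _)) (Finset.mem_univ i)
    have htmp : Tendsto (fun k => (d i - hH i) * (x (k + 1) i - x k i) ^ 2) atTop (𝓝 0) :=
      squeeze_zero (fun k => mul_nonneg hci.le (sq_nonneg _)) hbound hStend
    have heq : (fun k => (x (k + 1) i - x k i) ^ 2) =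
        fun k => (d i - hH i)⁻¹ * ((d i - hH i) * (x (k + 1) i - x k i) ^ 2) := by
      funext k; field_simp
    rw [heq]
    simpa using htmp.const_mul (d i - hH i)⁻¹
  have hsum0 : Tendsto (fun k => ∑ i, (x (k + 1) i - x k i) ^ 2) atTop (𝓝 0) := by
    have := tendsto_finset_sum Finset.univ fun i (_ : i ∈ Finset.univ) => hcoord i
    simpa using this
  have hnormeq : ∀ k, ‖x (k + 1) - x k‖ = Real.sqrt (∑ i, (x (k + 1) i - x k i) ^ 2) := by
    intro k
    rw [EuclideanSpace.norm_eq]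
    congr 1
    refine Finset.sum_congr rfl fun i _ => ?_
    have : (x (k + 1) - x k) i = x (k + 1) i - x k i := rfl
    rw [this, Real.norm_eq_abs, sq_abs]
  have hnorm0 : Tendsto (fun k => ‖x (k + 1) - x k‖) atTop (𝓝 0) := by
    have h1 : (fun k => ‖x (k + 1) - x k‖) =
        fun k => Real.sqrt (∑ i, (x (k + 1) i - x k i) ^ 2) := funext hnormeq
    rw [h1]
    have := (Real.continuous_sqrt.tendsto 0).comp hsum0
    simpa [Function.comp_def] using this
  have hΔ0 : Tendsto (fun k => x (k + 1) - x k) atTop (𝓝 0) :=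
    tendsto_zero_iff_norm_tendsto_zero.mpr hnorm0
  -- limit of the shifted subsequence
  have hnext : Tendsto (fun k => x (φ k + 1)) atTop (𝓝 xbar) := by
    have h1 := hΔ0.comp hφ.tendsto_atTop
    have h2 := hφtend.add h1
    simp only [Function.comp] at h2 ⊢
    have heq : (fun k => x (φ k) + (x (φ k + 1) - x (φ k))) = fun k => x (φ k + 1) := by
      funext k; abel
    rw [heq] at h2
    simpa using h2
  refine ⟨hxbar, fun y hy => ?_⟩
  -- the continuous model function
  set G : EuclideanSpace ℝ (Fin n) × EuclideanSpace ℝ (Fin n) → ℝ :=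
    fun p => ⟪gradient f p.1, p.2 - p.1⟫ + (1 / 2) * ∑ i, d i * (p.2 i - p.1 i) ^ 2 with hG
  have hGcont : Continuous G := by
    apply Continuous.add
    · exact (hgradcont.comp continuous_fst).inner (continuous_snd.sub continuous_fst)
    · refine continuous_const.mul (continuous_finset_sum _ fun i _ => ?_)
      exact continuous_const.mul
        ((((EuclideanSpace.proj (𝕜 := ℝ) i).continuous.comp continuous_snd).sub
          ((EuclideanSpace.proj (𝕜 := ℝ) i).continuous.comp continuous_fst)).pow 2)
  have hpair1 : Tendsto (fun k => (x (φ k), x (φ k + 1))) atTop (𝓝 (xbar, xbar)) :=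
    hφtend.prodMk_nhds hnext
  have hpair2 : Tendsto (fun k => (x (φ k), y)) atTop (𝓝 (xbar, y)) :=
    hφtend.prodMk_nhds tendsto_const_nhds
  have hL : Tendsto (fun k => G (x (φ k), x (φ k + 1))) atTop (𝓝 (G (xbar, xbar))) :=
    (hGcont.tendsto _).comp hpair1
  have hR : Tendsto (fun k => G (x (φ k), y)) atTop (𝓝 (G (xbar, y))) :=
    (hGcont.tendsto _).comp hpair2
  have hle : ∀ k, G (x (φ k), x (φ k + 1)) ≤ G (x (φ k), y) := fun k =>
    (hiter (φ k)).2 y hy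
  have hfin : G (xbar, xbar) ≤ G (xbar, y) := le_of_tendsto_of_tendsto' hL hR hle
  have hzero : G (xbar, xbar) = 0 := by simp [hG]
  rw [hzero] at hfin
  exact hfin
end

section
/- Let f be H-smooth, D diagonal with D ≻ H, f bounded below, and additionally let f satisfy s-restricted strong convexity: f(y) ≥ f(x) + ⟨∇f(x), y−x⟩ + (σ_s/2)‖y−x‖² whenever ‖x−y‖₀ ≤ s, for some σ_s > 0. Then the entire IWHT sequence (x_k) converges. -/
open scoped RealInnerProductSpace

open Filter

/-- In a metric space, a finite set admits a positive separation radius. -/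
lemma exists_sep_of_finite {X : Type*} [MetricSpace X] {A : Set X} (hA : A.Finite) :
    ∃ ε > 0, ∀ a ∈ A, ∀ b ∈ A, dist a b < ε → a = b := by
  classical
  have hA2 : ({p | p ∈ A ×ˢ A ∧ p.1 ≠ p.2} : Set (X × X)).Finite :=
    (hA.prod hA).subset fun p hp => hp.1
  have hD : ((fun p : X × X => dist p.1 p.2) '' {p | p ∈ A ×ˢ A ∧ p.1 ≠ p.2}).Finite :=
    hA2.image _
  set D := (fun p : X × X => dist p.1 p.2) '' {p | p ∈ A ×ˢ A ∧ p.1 ≠ p.2} with hDdef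
  rcases D.eq_empty_or_nonempty with hDe | hDne
  · refine ⟨1, one_pos, fun a ha b hb _ => ?_⟩
    by_contra hne
    have : dist a b ∈ D := ⟨(a, b), ⟨⟨ha, hb⟩, hne⟩, rfl⟩
    rw [hDe] at this
    exact this
  · set F := hD.toFinset with hF
    have hFne : F.Nonempty := by rwa [Set.Finite.toFinset_nonempty]
    have hmem : F.min' hFne ∈ D := by
      have := F.min'_mem hFne
      exact hD.mem_toFinset.mp this
    obtain ⟨p, ⟨⟨hp1, hp2⟩, hpne⟩, hpd⟩ := hmem
    refine ⟨F.min' hFne, by rw [← hpd]; exact dist_pos.mpr hpne, fun a ha b hb hab => ?_⟩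
    by_contra hne
    have : dist a b ∈ D := ⟨(a, b), ⟨⟨ha, hb⟩, hne⟩, rfl⟩
    have hmin : F.min' hFne ≤ dist a b := F.min'_le _ (hD.mem_toFinset.mpr this)
    linarith

set_option maxHeartbeats 2000000 in
/-- under `s`-restricted strong convexity, the entire IWHT sequence
converges. -/
theorem iwht_converges_of_rsc {n s : ℕ}
    (f : EuclideanSpace ℝ (Fin n) → ℝ) (hf : ContDiff ℝ 1 f)
    (hconv : ConvexOn ℝ Set.univ f) (hbdd : BddBelow (Set.range f))
    (hH d : Fin n → ℝ) (hDH : ∀ i, hH i < d i)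
    (hsmooth : ∀ x y : EuclideanSpace ℝ (Fin n),
      f y ≤ f x + ⟪gradient f x, y - x⟫ + (1 / 2) * ∑ i, hH i * (y i - x i) ^ 2)
    (σs : ℝ) (hσ : 0 < σs)
    (hrsc : ∀ x y : EuclideanSpace ℝ (Fin n),
      (Finset.univ.filter fun i => x i - y i ≠ 0).card ≤ s →
      f x + ⟪gradient f x, y - x⟫ + σs / 2 * ‖y - x‖ ^ 2 ≤ f y)
    (x : ℕ → EuclideanSpace ℝ (Fin n)) (hx0 : x 0 ∈ sparseSet n s)
    (hiter : ∀ k, x (k + 1) ∈ sparseSet n s ∧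
      ∀ y ∈ sparseSet n s,
        ⟪gradient f (x k), x (k + 1) - x k⟫ +
          (1 / 2) * ∑ i, d i * (x (k + 1) i - x k i) ^ 2 ≤
        ⟪gradient f (x k), y - x k⟫ + (1 / 2) * ∑ i, d i * (y i - x k i) ^ 2) :
    ∃ xbar, Filter.Tendsto x Filter.atTop (nhds xbar) := by
  classical
  rcases Nat.eq_zero_or_pos n with hn | hn
  · subst hn
    haveI : Subsingleton (EuclideanSpace ℝ (Fin 0)) := ⟨fun a b => PiLp.ext fun i => Fin.elim0 i⟩
    refine ⟨x 0, ?_⟩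
    have hx : x = fun _ => x 0 := funext fun k => Subsingleton.elim _ _
    rw [hx]; exact tendsto_const_nhds
  haveI : Nonempty (Fin n) := ⟨⟨0, hn⟩⟩
  -- gradient continuity
  have hgcont : Continuous fun z => gradient f z := by
    have he : (fun z => gradient f z) =
        fun z => (InnerProductSpace.toDual ℝ (EuclideanSpace ℝ (Fin n))).symm (fderiv ℝ f z) :=
      rfl
    rw [he]
    exact (InnerProductSpace.toDual ℝ _).symm.continuous.comp (hf.continuous_fderiv one_ne_zero)
  -- all iterates are sparse
  have hxk : ∀ k, x k ∈ sparseSet n s := by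
    intro k
    induction k with
    | zero => exact hx0
    | succ k _ => exact (hiter k).1
  -- squared norm as a sum
  have hsq : ∀ y : EuclideanSpace ℝ (Fin n), ‖y‖ ^ 2 = ∑ i, y i ^ 2 := fun y => by
    rw [EuclideanSpace.norm_eq, Real.sq_sqrt (Finset.sum_nonneg fun i _ => sq_nonneg _)]
    simp [Real.norm_eq_abs, sq_abs]
  -- minimal gap δ
  set δ := Finset.univ.inf' Finset.univ_nonempty (fun i => d i - hH i) with hδdef
  have hδ : 0 < δ := by
    rw [hδdef, Finset.lt_inf'_iff]
    intro i _
    linarith [hDH i]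
  have hδle : ∀ i, δ ≤ d i - hH i := fun i => Finset.inf'_le _ (Finset.mem_univ i)
  -- the iterate minimizes the surrogate, comparison with y = x k
  have step1 : ∀ k, ⟪gradient f (x k), x (k + 1) - x k⟫ +
      (1 / 2) * ∑ i, d i * (x (k + 1) i - x k i) ^ 2 ≤ 0 := by
    intro k
    have h := (hiter k).2 (x k) (hxk k)
    simpa using h
  -- sufficient decrease
  have descent : ∀ k, f (x (k + 1)) + δ / 2 * ‖x (k + 1) - x k‖ ^ 2 ≤ f (x k) := by
    intro k
    have h1 := hsmooth (x k) (x (k + 1))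
    have h2 := step1 k
    have h3 : δ * ‖x (k + 1) - x k‖ ^ 2 ≤ ∑ i, (d i - hH i) * (x (k + 1) i - x k i) ^ 2 := by
      rw [hsq, Finset.mul_sum]
      refine Finset.sum_le_sum fun i _ => ?_
      have hi : (x (k + 1) - x k) i = x (k + 1) i - x k i := by simp
      rw [hi]
      nlinarith [hδle i, sq_nonneg (x (k + 1) i - x k i)]
    have h4 : ∑ i, (d i - hH i) * (x (k + 1) i - x k i) ^ 2
        = ∑ i, d i * (x (k + 1) i - x k i) ^ 2 - ∑ i, hH i * (x (k + 1) i - x k i) ^ 2 := by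
      rw [← Finset.sum_sub_distrib]
      exact Finset.sum_congr rfl fun i _ => by ring
    linarith
  have mono : ∀ k, f (x (k + 1)) ≤ f (x k) := by
    intro k
    have := descent k
    nlinarith [sq_nonneg ‖x (k + 1) - x k‖]
  have fanti : Antitone fun k => f (x k) := antitone_nat_of_succ_le mono
  have fb : BddBelow (Set.range fun k => f (x k)) :=
    hbdd.mono (Set.range_comp_subset_range x f)
  have ftend : Tendsto (fun k => f (x k)) atTop (nhds (⨅ k, f (x k))) :=
    tendsto_atTop_ciInf fanti fb
  have ftend' : Tendsto (fun k => f (x (k + 1))) atTop (nhds (⨅ k, f (x k))) :=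
    ftend.comp (tendsto_add_atTop_nat 1)
  have hdiff0 : Tendsto (fun k => f (x k) - f (x (k + 1))) atTop (nhds 0) := by
    have := ftend.sub ftend'
    simpa using this
  -- the step differences tend to 0
  have hnorm0 : Tendsto (fun k => ‖x (k + 1) - x k‖) atTop (nhds 0) := by
    have h1 : Tendsto (fun k => ‖x (k + 1) - x k‖ ^ 2) atTop (nhds 0) := by
      refine squeeze_zero (fun k => sq_nonneg _) (fun k => ?_)
        (g := fun k => 2 / δ * (f (x k) - f (x (k + 1)))) ?_
      · show ‖x (k + 1) - x k‖ ^ 2 ≤ 2 / δ * (f (x k) - f (x (k + 1)))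
        rw [div_mul_eq_mul_div, le_div_iff₀ hδ]
        nlinarith [descent k]
      · have := hdiff0.const_mul (2 / δ)
        simpa using this
    have h2 := (Real.continuous_sqrt.tendsto 0).comp h1
    have he : (fun k => Real.sqrt (‖x (k + 1) - x k‖ ^ 2)) = fun k => ‖x (k + 1) - x k‖ :=
      funext fun k => Real.sqrt_sq (norm_nonneg _)
    have h2' : Tendsto (fun k => Real.sqrt (‖x (k + 1) - x k‖ ^ 2)) atTop (nhds 0) := by
      simpa [Function.comp_def] using h2
    rwa [he] at h2'
  have hΔ : Tendsto (fun k => x (k + 1) - x k) atTop (nhds 0) :=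
    tendsto_zero_iff_norm_tendsto_zero.mpr hnorm0
  -- boundedness of the sequence
  have hA0 : ∀ k, f (x k) ≤ f (x 0) := fun k => fanti (Nat.zero_le k)
  have hlow : ∀ k, σs / 2 * ‖x k‖ ^ 2 ≤ (f (x 0) - f 0) +
      ‖gradient f (0 : EuclideanSpace ℝ (Fin n))‖ * ‖x k‖ := by
    intro k
    have hcard : (Finset.univ.filter fun i =>
        (0 : EuclideanSpace ℝ (Fin n)) i - x k i ≠ 0).card ≤ s := by
      have he : (Finset.univ.filter fun i => (0 : EuclideanSpace ℝ (Fin n)) i - x k i ≠ 0)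
          = Finset.univ.filter fun i => x k i ≠ 0 := by
        refine Finset.filter_congr fun i _ => ?_
        simp
      rw [he]; exact hxk k
    have h := hrsc 0 (x k) hcard
    rw [sub_zero] at h
    have hi := abs_real_inner_le_norm (gradient f (0 : EuclideanSpace ℝ (Fin n))) (x k)
    have hi2 := neg_abs_le ⟪gradient f (0 : EuclideanSpace ℝ (Fin n)), x k⟫
    have := hA0 k
    linarith
  have hR : ∀ k, ‖x k‖ ≤ max 1 (2 / σs * (|f (x 0) - f 0| +
      ‖gradient f (0 : EuclideanSpace ℝ (Fin n))‖)) := by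
    intro k
    rcases le_or_gt ‖x k‖ 1 with h | h
    · exact le_trans h (le_max_left _ _)
    · refine le_trans ?_ (le_max_right _ _)
      have h0 := hlow k
      have hcnn : (0:ℝ) ≤ ‖gradient f (0 : EuclideanSpace ℝ (Fin n))‖ := norm_nonneg _
      have habs : f (x 0) - f 0 ≤ |f (x 0) - f 0| := le_abs_self _
      have habs0 : (0:ℝ) ≤ |f (x 0) - f 0| := abs_nonneg _
      rw [div_mul_eq_mul_div, le_div_iff₀ hσ]
      nlinarith [mul_le_mul_of_nonneg_left habs (le_of_lt (lt_trans one_pos h)),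
        mul_nonneg habs0 (by linarith : (0:ℝ) ≤ ‖x k‖ - 1),
        mul_nonneg hcnn (by linarith : (0:ℝ) ≤ ‖x k‖ - 1)]
  set R := max 1 (2 / σs * (|f (x 0) - f 0| +
      ‖gradient f (0 : EuclideanSpace ℝ (Fin n))‖)) with hRdef
  have hball : ∀ k, x k ∈ Metric.closedBall (0 : EuclideanSpace ℝ (Fin n)) R := by
    intro k
    rw [Metric.mem_closedBall, dist_zero_right]
    exact hR k
  -- every cluster point is sparse
  have hCsparse : ∀ (a : EuclideanSpace ℝ (Fin n)) (φ : ℕ → ℕ), Tendsto φ atTop atTop →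
      Tendsto (x ∘ φ) atTop (nhds a) → a ∈ sparseSet n s := by
    intro a φ hφ hconv
    have hev : ∀ᶠ j in atTop, ∀ i ∈ (Finset.univ.filter fun i => a i ≠ 0),
        x (φ j) i ≠ 0 := by
      rw [eventually_all_finset]
      intro i hi
      rw [Finset.mem_filter] at hi
      have hcoord : Tendsto (fun j => (x ∘ φ) j i) atTop (nhds (a i)) :=
        ((PiLp.continuous_apply 2 _ i).tendsto a).comp hconv
      exact hcoord.eventually_ne hi.2
    obtain ⟨j, hj⟩ := hev.exists
    have hsub : (Finset.univ.filter fun i => a i ≠ 0) ⊆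
        Finset.univ.filter fun i => x (φ j) i ≠ 0 := by
      intro i hi
      rw [Finset.mem_filter]
      exact ⟨Finset.mem_univ i, hj i hi⟩
    exact le_trans (Finset.card_le_card hsub) (hxk (φ j))
  -- fixed point inequality at cluster points
  have FP : ∀ (a : EuclideanSpace ℝ (Fin n)) (φ : ℕ → ℕ), Tendsto φ atTop atTop →
      Tendsto (x ∘ φ) atTop (nhds a) → ∀ y ∈ sparseSet n s,
      0 ≤ ⟪gradient f a, y - a⟫ + (1 / 2) * ∑ i, d i * (y i - a i) ^ 2 := by
    intro a φ hφ hconv y hy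
    have hΔφ : Tendsto (fun j => x (φ j + 1) - x (φ j)) atTop (nhds 0) := hΔ.comp hφ
    have hconv' : Tendsto (fun j => x (φ j + 1)) atTop (nhds a) := by
      have := hΔφ.add hconv
      simpa using this
    have hglim : Tendsto (fun j => gradient f (x (φ j))) atTop (nhds (gradient f a)) :=
      (hgcont.tendsto a).comp hconv
    have hcoord : ∀ i : Fin n, Tendsto (fun j => x (φ j) i) atTop (nhds (a i)) :=
      fun i => ((PiLp.continuous_apply 2 _ i).tendsto a).comp hconv
    have hcoord' : ∀ i : Fin n, Tendsto (fun j => x (φ j + 1) i) atTop (nhds (a i)) :=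
      fun i => ((PiLp.continuous_apply 2 _ i).tendsto a).comp hconv'
    have hL : Tendsto (fun j => ⟪gradient f (x (φ j)), x (φ j + 1) - x (φ j)⟫ +
        (1 / 2) * ∑ i, d i * (x (φ j + 1) i - x (φ j) i) ^ 2) atTop (nhds 0) := by
      have t1 : Tendsto (fun j => ⟪gradient f (x (φ j)), x (φ j + 1) - x (φ j)⟫)
          atTop (nhds (0:ℝ)) := by
        have := Filter.Tendsto.inner (𝕜 := ℝ) hglim hΔφ
        simpa using this
      have t2 : Tendsto (fun j => ∑ i, d i * (x (φ j + 1) i - x (φ j) i) ^ 2)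
          atTop (nhds 0) := by
        have := tendsto_finset_sum Finset.univ
          (fun i _ => ((((hcoord' i).sub (hcoord i)).pow 2).const_mul (d i)))
        simpa using this
      have := t1.add (t2.const_mul ((1:ℝ)/2))
      simpa using this
    have hRt : Tendsto (fun j => ⟪gradient f (x (φ j)), y - x (φ j)⟫ +
        (1 / 2) * ∑ i, d i * (y i - x (φ j) i) ^ 2) atTop
        (nhds (⟪gradient f a, y - a⟫ + (1 / 2) * ∑ i, d i * (y i - a i) ^ 2)) := by
      have t1 : Tendsto (fun j => ⟪gradient f (x (φ j)), y - x (φ j)⟫)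
          atTop (nhds ⟪gradient f a, y - a⟫) :=
        Filter.Tendsto.inner (𝕜 := ℝ) hglim (tendsto_const_nhds.sub hconv)
      have t2 : Tendsto (fun j => ∑ i, d i * (y i - x (φ j) i) ^ 2)
          atTop (nhds (∑ i, d i * (y i - a i) ^ 2)) :=
        tendsto_finset_sum Finset.univ
          (fun i _ => (((tendsto_const_nhds.sub (hcoord i)).pow 2).const_mul (d i)))
      exact t1.add (t2.const_mul ((1:ℝ)/2))
    exact le_of_tendsto_of_tendsto' hL hRt (fun j => (hiter (φ j)).2 y hy)
  -- cluster points minimize f over their own support, strongly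
  have keymin : ∀ (a : EuclideanSpace ℝ (Fin n)) (φ : ℕ → ℕ), Tendsto φ atTop atTop →
      Tendsto (x ∘ φ) atTop (nhds a) → ∀ y : EuclideanSpace ℝ (Fin n),
      ((Finset.univ.filter fun i => y i ≠ 0) ⊆ Finset.univ.filter fun i => a i ≠ 0) →
      f a + σs / 2 * ‖y - a‖ ^ 2 ≤ f y := by
    intro a φ hφ hconv y hsub
    have hsupp_a : (Finset.univ.filter fun i => a i ≠ 0).card ≤ s := hCsparse a φ hφ hconv
    have hy0 : ∀ i : Fin n, a i = 0 → y i = 0 := by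
      intro i hai
      by_contra hyi
      have : i ∈ Finset.univ.filter fun i => a i ≠ 0 :=
        hsub (Finset.mem_filter.mpr ⟨Finset.mem_univ i, hyi⟩)
      exact (Finset.mem_filter.mp this).2 hai
    -- first: the inner product is nonnegative
    have hinn : 0 ≤ ⟪gradient f a, y - a⟫ := by
      set Cst := (1 / 2) * ∑ i, d i * (y i - a i) ^ 2 with hCst
      have key_t : ∀ t : ℝ, 0 < t → t ≤ 1 → 0 ≤ ⟪gradient f a, y - a⟫ + t * Cst := by
        intro t ht ht1
        have hyt : (a + t • (y - a)) ∈ sparseSet n s := by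
          refine le_trans (Finset.card_le_card ?_) hsupp_a
          intro i hi
          rw [Finset.mem_filter] at hi ⊢
          refine ⟨Finset.mem_univ i, fun hai => ?_⟩
          have : (a + t • (y - a)) i = a i + t * (y i - a i) := by simp
          rw [this, hai, hy0 i hai] at hi
          simp at hi
        have h := FP a φ hφ hconv (a + t • (y - a)) hyt
        have e1 : (a + t • (y - a)) - a = t • (y - a) := by abel
        have e2 : ⟪gradient f a, (a + t • (y - a)) - a⟫ = t * ⟪gradient f a, y - a⟫ := by
          rw [e1, real_inner_smul_right]
        have e3 : ∑ i, d i * ((a + t • (y - a)) i - a i) ^ 2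
            = t ^ 2 * ∑ i, d i * (y i - a i) ^ 2 := by
          rw [Finset.mul_sum]
          refine Finset.sum_congr rfl fun i _ => ?_
          have : (a + t • (y - a)) i = a i + t * (y i - a i) := by simp
          rw [this]; ring
        rw [e2, e3] at h
        have h2 : 0 ≤ t * (⟪gradient f a, y - a⟫ + t * Cst) := by
          rw [hCst]; nlinarith [h]
        nlinarith [h2, ht]
      by_contra hI
      push_neg at hI
      set Cp := max Cst 0 + 1 with hCp
      have hCp0 : 0 < Cp := by
        have := le_max_right Cst 0
        rw [hCp]; linarith
      set t := min 1 (-⟪gradient f a, y - a⟫ / (2 * Cp)) with htdef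
      have ht0 : 0 < t := by
        rw [htdef]
        refine lt_min one_pos (div_pos (by linarith) (by linarith))
      have ht1 : t ≤ 1 := min_le_left _ _
      have h1 := key_t t ht0 ht1
      have h2 : t * Cst ≤ t * Cp := by
        refine mul_le_mul_of_nonneg_left ?_ ht0.le
        rw [hCp]; linarith [le_max_left Cst 0]
      have h3 : t * Cp ≤ (-⟪gradient f a, y - a⟫ / (2 * Cp)) * Cp :=
        mul_le_mul_of_nonneg_right (min_le_right _ _) hCp0.le
      have h4 : (-⟪gradient f a, y - a⟫ / (2 * Cp)) * Cp = -⟪gradient f a, y - a⟫ / 2 := by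
        field_simp
      rw [h4] at h3
      nlinarith [h1, h2, h3, hI]
    -- then apply restricted strong convexity
    have hcard : (Finset.univ.filter fun i => a i - y i ≠ 0).card ≤ s := by
      refine le_trans (Finset.card_le_card ?_) hsupp_a
      intro i hi
      rw [Finset.mem_filter] at hi ⊢
      refine ⟨Finset.mem_univ i, fun hai => ?_⟩
      rw [hai, hy0 i hai] at hi
      simp at hi
    have := hrsc a y hcard
    linarith
  -- the set of cluster points
  set A : Set (EuclideanSpace ℝ (Fin n)) := {a | ∃ φ : ℕ → ℕ,
    Tendsto φ atTop atTop ∧ Tendsto (x ∘ φ) atTop (nhds a)} with hAdef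
  -- A is nonempty
  have hAne : A.Nonempty := by
    obtain ⟨a, -, φ, hφ, hconv⟩ :=
      tendsto_subseq_of_bounded Metric.isBounded_closedBall hball
    exact ⟨a, φ, hφ.tendsto_atTop, hconv⟩
  -- cluster points with the same support coincide
  have hCuniq : ∀ a ∈ A, ∀ b ∈ A,
      (Finset.univ.filter fun i => a i ≠ 0) = (Finset.univ.filter fun i => b i ≠ 0) →
      a = b := by
    rintro a ⟨φa, hφa, hca⟩ b ⟨φb, hφb, hcb⟩ hsupp
    have h1 := keymin a φa hφa hca b (by rw [hsupp])
    have h2 := keymin b φb hφb hcb a (by rw [hsupp])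
    have hnn : ‖b - a‖ = ‖a - b‖ := norm_sub_rev _ _
    have : ‖a - b‖ ^ 2 ≤ 0 := by nlinarith [h1, h2, hnn]
    have h0 : ‖a - b‖ = 0 := by nlinarith [norm_nonneg (a - b)]
    have := norm_eq_zero.mp h0
    exact sub_eq_zero.mp this
  -- A is finite
  have hAfin : A.Finite := by
    refine Set.Finite.of_finite_image (Set.toFinite _)
      (f := fun a => Finset.univ.filter fun i => a i ≠ 0) ?_
    intro a ha b hb hab
    exact hCuniq a ha b hb hab
  -- a positive separation radius for A
  obtain ⟨ε0, hε0, hsep0⟩ := exists_sep_of_finite hAfin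
  set ε := ε0 / 3 with hεdef
  have hε : 0 < ε := by rw [hεdef]; linarith
  have hsep : ∀ a ∈ A, ∀ b ∈ A, dist a b < 3 * ε → a = b := by
    intro a ha b hb hd
    refine hsep0 a ha b hb ?_
    rw [hεdef] at hd; linarith
  -- eventually the sequence is ε-close to some cluster point
  have hnear : ∀ᶠ k in atTop, ∃ a ∈ A, dist (x k) a < ε := by
    by_contra hcon
    rw [Filter.not_eventually] at hcon
    have hcon' : ∃ᶠ k in atTop, ∀ a ∈ A, ε ≤ dist (x k) a := by
      refine hcon.mono fun k hk => ?_
      push_neg at hk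
      exact hk
    obtain ⟨ns, hns, hprop⟩ := frequently_iff_seq_forall.mp hcon'
    obtain ⟨b, -, ms, hms, hcb⟩ :=
      tendsto_subseq_of_bounded Metric.isBounded_closedBall
        (x := fun j => x (ns j)) (fun j => hball (ns j))
    have hbA : b ∈ A := ⟨ns ∘ ms, hns.comp hms.tendsto_atTop, hcb⟩
    have hd0 : Tendsto (fun j => dist (x (ns (ms j))) b) atTop (nhds 0) := by
      have := tendsto_iff_dist_tendsto_zero.mp hcb
      simpa [Function.comp_def] using this
    obtain ⟨j, hj⟩ := (hd0.eventually (gt_mem_nhds hε)).exists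
    exact absurd hj (not_lt.mpr (hprop (ms j) b hbA))
  -- eventually consecutive steps are small
  have hsmall : ∀ᶠ k in atTop, ‖x (k + 1) - x k‖ < ε :=
    hnorm0.eventually (gt_mem_nhds hε)
  obtain ⟨N, hN⟩ := Filter.eventually_atTop.mp (hnear.and hsmall)
  obtain ⟨a0, ha0A, ha0d⟩ := (hN N le_rfl).1
  -- the sequence stays ε-close to a0 from N on
  have hstay : ∀ k, N ≤ k → dist (x k) a0 < ε := by
    intro k hk
    induction k, hk using Nat.le_induction with
    | base => exact ha0d
    | succ k hk ih =>
      obtain ⟨⟨b, hbA, hbd⟩, -⟩ := hN (k + 1) (by omega)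
      have hstep : dist (x (k + 1)) (x k) < ε := by
        rw [dist_eq_norm]; exact (hN k hk).2
      have hab : dist a0 b < 3 * ε := by
        have t1 : dist a0 b ≤ dist a0 (x (k + 1)) + dist (x (k + 1)) b := dist_triangle _ _ _
        have t2 : dist a0 (x (k + 1)) ≤ dist a0 (x k) + dist (x k) (x (k + 1)) :=
          dist_triangle _ _ _
        rw [dist_comm a0 (x k)] at t2
        rw [dist_comm (x k) (x (k + 1))] at t2
        linarith
      have hba : b = a0 := (hsep a0 ha0A b hbA hab).symm
      rw [← hba]
      exact hbd
  -- conclude convergence to a0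
  refine ⟨a0, tendsto_of_subseq_tendsto fun ns hns => ?_⟩
  obtain ⟨b, -, ms, hms, hcb⟩ :=
    tendsto_subseq_of_bounded Metric.isBounded_closedBall
      (x := fun j => x (ns j)) (fun j => hball (ns j))
  have hbA : b ∈ A := ⟨ns ∘ ms, hns.comp hms.tendsto_atTop, hcb⟩
  have hdlim : Tendsto (fun j => dist (x (ns (ms j))) a0) atTop (nhds (dist b a0)) := by
    have := (Filter.Tendsto.dist hcb (tendsto_const_nhds (x := a0)))
    simpa [Function.comp_def] using this
  have hev : ∀ᶠ j in atTop, dist (x (ns (ms j))) a0 ≤ ε := by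
    have : ∀ᶠ j in atTop, N ≤ ns (ms j) :=
      (hns.comp hms.tendsto_atTop).eventually_ge_atTop N
    exact this.mono fun j hj => (hstay _ hj).le
  have hba : dist b a0 ≤ ε := le_of_tendsto hdlim hev
  have : b = a0 := hsep b hbA a0 ha0A (by linarith)
  rw [this] at hcb
  exact ⟨ms, by simpa [Function.comp_def] using hcb⟩
end

section
/- Suppose the IWHT sequence (x_k) has a limit point x̄ with ‖x̄‖₀ = s, and for all sufficiently large k the supports I_1(x_k), I_1(x_{k+1}) and I_1(x̄) coincide (equal to a set S of size s). Then on the common support, the IWHT update reduces to z_{k+1} = z_k − D_S^{-1}∇f̄(z_k), and one has ‖z_{k+1} − z̄‖²_{D_S} ≤ ‖z_k − z̄‖²_{D_S} − ‖∇f̄(z_k)‖²_{D_S^{-1}}, where f̄ is the restriction of f to support S, z_k = (x_k)_S, z̄ = x̄_S, and ∇f̄(z̄) = 0. -/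
open scoped RealInnerProductSpace

lemma inner_eq_sum' {n : ℕ} (x y : EuclideanSpace ℝ (Fin n)) : ⟪x, y⟫ = ∑ i, x i * y i := by
  simp [PiLp.inner_apply, RCLike.inner_apply, mul_comm]

lemma convex_grad_le {n : ℕ} {f : EuclideanSpace ℝ (Fin n) → ℝ} (hf : ContDiff ℝ 1 f)
    (hconv : ConvexOn ℝ Set.univ f) (u v : EuclideanSpace ℝ (Fin n)) :
    f u + ⟪gradient f u, v - u⟫ ≤ f v := by
  have hdiff : Differentiable ℝ f := hf.differentiable one_ne_zero
  have hinner : ⟪gradient f u, v - u⟫ = fderiv ℝ f u (v - u) := by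
    have h := (hdiff u).hasGradientAt
    rw [hasGradientAt_iff_hasFDerivAt] at h
    rw [h.fderiv, InnerProductSpace.toDual_apply_apply]
  set g : ℝ → ℝ := fun t => f (u + t • (v - u)) with hg
  have hgconv : ConvexOn ℝ Set.univ g := by
    have := hconv.comp_affineMap (AffineMap.lineMap u v : ℝ →ᵃ[ℝ] EuclideanSpace ℝ (Fin n))
    simp only [Set.preimage_univ] at this
    have heq : g = f ∘ ⇑(AffineMap.lineMap u v : ℝ →ᵃ[ℝ] EuclideanSpace ℝ (Fin n)) := by
      funext t
      simp [hg, AffineMap.lineMap_apply_module, Function.comp]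
      ring_nf
      congr 1
      module
    rw [heq]; exact this
  have hline : HasDerivAt (fun t : ℝ => u + t • (v - u)) (v - u) 0 := by
    simpa using ((hasDerivAt_id (0:ℝ)).smul_const (v - u)).const_add u
  have hgderiv : HasDerivAt g (fderiv ℝ f u (v - u)) 0 := by
    have := ((hdiff (u + (0:ℝ) • (v - u))).hasFDerivAt).comp_hasDerivAt 0 hline
    simp only [zero_smul, add_zero] at this
    exact this
  have hslope := hgconv.le_slope_of_hasDerivAt (Set.mem_univ 0) (Set.mem_univ 1)
    one_pos hgderiv
  have : slope g 0 1 = f v - f u := by simp [slope, hg]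
  rw [this] at hslope
  rw [hinner]
  linarith

set_option maxHeartbeats 1000000 in
/-- on a common support `S` of size `s`, the IWHT update reduces to a
(weighted) gradient step `z⁺ = z − D_S⁻¹ ∇f̄(z)`, and the `D_S`-distance to the limit
point decreases by at least the `D_S⁻¹` squared gradient norm. Here `f` is convex,
`D_S`-smooth on vectors supported in `S`, and `x̄` satisfies `∇_S f(x̄) = 0`. -/
theorem iwht_same_support_gradient_step {n s : ℕ}
    (f : EuclideanSpace ℝ (Fin n) → ℝ) (hf : ContDiff ℝ 1 f)
    (hconv : ConvexOn ℝ Set.univ f)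
    (d : Fin n → ℝ) (hd : ∀ i, 0 < d i)
    (S : Finset (Fin n)) (hS : S.card = s)
    (hsmoothS : ∀ u v : EuclideanSpace ℝ (Fin n),
      (∀ i ∉ S, u i = 0) → (∀ i ∉ S, v i = 0) →
      f v ≤ f u + ⟪gradient f u, v - u⟫ + (1 / 2) * ∑ i ∈ S, d i * (v i - u i) ^ 2)
    (xk xk1 xbar : EuclideanSpace ℝ (Fin n))
    (hsupp_k : ∀ i, xk i ≠ 0 ↔ i ∈ S)
    (hsupp_k1 : ∀ i, xk1 i ≠ 0 ↔ i ∈ S)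
    (hsupp_bar : ∀ i, xbar i ≠ 0 ↔ i ∈ S)
    (hgrad_bar : ∀ i ∈ S, gradient f xbar i = 0)
    (hiter : xk1 ∈ sparseSet n s ∧
      ∀ y ∈ sparseSet n s,
        ⟪gradient f xk, xk1 - xk⟫ + (1 / 2) * ∑ i, d i * (xk1 i - xk i) ^ 2 ≤
        ⟪gradient f xk, y - xk⟫ + (1 / 2) * ∑ i, d i * (y i - xk i) ^ 2) :
    (∀ i ∈ S, xk1 i = xk i - gradient f xk i / d i) ∧
    ∑ i ∈ S, d i * (xk1 i - xbar i) ^ 2 ≤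
      ∑ i ∈ S, d i * (xk i - xbar i) ^ 2 - ∑ i ∈ S, (gradient f xk i) ^ 2 / d i := by
  set g : EuclideanSpace ℝ (Fin n) := gradient f xk with hgdef
  have hz_k : ∀ i ∉ S, xk i = 0 := fun i hi => by
    by_contra h; exact hi ((hsupp_k i).1 h)
  have hz_k1 : ∀ i ∉ S, xk1 i = 0 := fun i hi => by
    by_contra h; exact hi ((hsupp_k1 i).1 h)
  have hz_bar : ∀ i ∉ S, xbar i = 0 := fun i hi => by
    by_contra h; exact hi ((hsupp_bar i).1 h)
  -- rewrite the objective as a single sum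
  have hobj : ∀ z : EuclideanSpace ℝ (Fin n),
      ⟪g, z - xk⟫ + (1 / 2) * ∑ i, d i * (z i - xk i) ^ 2
      = ∑ i, (g i * (z i - xk i) + (1 / 2) * (d i * (z i - xk i) ^ 2)) := by
    intro z
    rw [inner_eq_sum', Finset.mul_sum, ← Finset.sum_add_distrib]
    exact Finset.sum_congr rfl fun i _ => by simp [PiLp.sub_apply]
  -- Part 1
  have part1 : ∀ i ∈ S, xk1 i = xk i - g i / d i := by
    intro i0 hi0
    set c : ℝ := xk i0 - g i0 / d i0 with hc
    set y : EuclideanSpace ℝ (Fin n) := WithLp.toLp 2 (Function.update xk1 i0 c) with hy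
    have hymem : y ∈ sparseSet n s := by
      rw [sparseSet, Set.mem_setOf_eq, ← hS]
      apply Finset.card_le_card
      intro i hi
      simp only [Finset.mem_filter] at hi
      by_cases h : i = i0
      · subst h; exact hi0
      · have hyi : y i = xk1 i := Function.update_of_ne h _ _
        exact (hsupp_k1 i).1 (hyi ▸ hi.2)
    have hQ := hiter.2 y hymem
    rw [hobj xk1, hobj y] at hQ
    set F : Fin n → ℝ → ℝ := fun i t => g i * (t - xk i) + (1 / 2) * (d i * (t - xk i) ^ 2)
      with hF
    have hsplit : ∀ h : Fin n → ℝ,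
        ∑ i, h i = h i0 + ∑ i ∈ Finset.univ.erase i0, h i :=
      fun h => (Finset.add_sum_erase _ _ (Finset.mem_univ i0)).symm
    rw [hsplit, hsplit] at hQ
    have herase : ∑ i ∈ Finset.univ.erase i0,
          (g i * (y i - xk i) + (1 / 2) * (d i * (y i - xk i) ^ 2))
        = ∑ i ∈ Finset.univ.erase i0,
          (g i * (xk1 i - xk i) + (1 / 2) * (d i * (xk1 i - xk i) ^ 2)) := by
      apply Finset.sum_congr rfl
      intro i hi
      rw [show y i = xk1 i from Function.update_of_ne (Finset.ne_of_mem_erase hi) _ _]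
    rw [herase] at hQ
    have hyc : y i0 = c := Function.update_self i0 c xk1.ofLp
    rw [hyc] at hQ
    -- hQ : F i0 (xk1 i0) + Σ ≤ F i0 c + Σ
    have hdi : 0 < d i0 := hd i0
    have hdne : d i0 ≠ 0 := hdi.ne'
    have hcoord : g i0 * (xk1 i0 - xk i0) + 1 / 2 * (d i0 * (xk1 i0 - xk i0) ^ 2)
        ≤ -(g i0 ^ 2) / (2 * d i0) := by
      have hrhs : g i0 * (c - xk i0) + 1 / 2 * (d i0 * (c - xk i0) ^ 2)
          = -(g i0 ^ 2) / (2 * d i0) := by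
        rw [hc]; field_simp; ring
      linarith [hQ, hrhs]
    have hmul : 2 * d i0 * (g i0 * (xk1 i0 - xk i0) + 1 / 2 * (d i0 * (xk1 i0 - xk i0) ^ 2))
        ≤ 2 * d i0 * (-(g i0 ^ 2) / (2 * d i0)) :=
      mul_le_mul_of_nonneg_left hcoord (by positivity)
    have hr : 2 * d i0 * (-(g i0 ^ 2) / (2 * d i0)) = -(g i0 ^ 2) := by
      field_simp
    have hsq : (d i0 * (xk1 i0 - xk i0) + g i0) ^ 2 ≤ 0 := by nlinarith [hmul, hr]
    have h0 : d i0 * (xk1 i0 - xk i0) + g i0 = 0 := by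
      nlinarith [sq_nonneg (d i0 * (xk1 i0 - xk i0) + g i0)]
    have h1 : xk1 i0 - xk i0 = -(g i0) / d i0 := by
      rw [eq_div_iff hdne]; linear_combination h0
    rw [neg_div] at h1
    show xk1 i0 = c
    rw [hc]
    linarith [h1]
  -- Part 2
  set w : EuclideanSpace ℝ (Fin n) := WithLp.toLp 2 (fun i => if i ∈ S then xbar i + g i / d i else 0) with hw
  have hz_w : ∀ i ∉ S, w i = 0 := fun i hi => by simp [hw, hi]
  set E : ℝ := ∑ i ∈ S, g i ^ 2 / d i with hE
  set K : ℝ := ∑ i ∈ S, g i * (xk i - xbar i) with hK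
  -- (A) smoothness at (xk, xk1)
  have hA := hsmoothS xk xk1 hz_k hz_k1
  have hA1 : ⟪g, xk1 - xk⟫ = -E := by
    rw [inner_eq_sum', hE]
    rw [← Finset.sum_subset (Finset.subset_univ S)
      (fun i _ hi => by simp [PiLp.sub_apply, hz_k i hi, hz_k1 i hi])]
    rw [← Finset.sum_neg_distrib]
    apply Finset.sum_congr rfl
    intro i hi
    have := part1 i hi
    have hdne : d i ≠ 0 := (hd i).ne'
    simp only [PiLp.sub_apply, this]
    field_simp
    ring
  have hA2 : ∑ i ∈ S, d i * (xk1 i - xk i) ^ 2 = E := by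
    rw [hE]
    apply Finset.sum_congr rfl
    intro i hi
    have := part1 i hi
    have hdne : d i ≠ 0 := (hd i).ne'
    rw [this]
    field_simp
    ring
  rw [hA1, hA2] at hA
  -- (B) convexity at (xbar, xk1)
  have hB := convex_grad_le hf hconv xbar xk1
  have hB1 : ⟪gradient f xbar, xk1 - xbar⟫ = 0 := by
    rw [inner_eq_sum']
    apply Finset.sum_eq_zero
    intro i _
    by_cases hi : i ∈ S
    · rw [hgrad_bar i hi]; ring
    · simp [PiLp.sub_apply, hz_k1 i hi, hz_bar i hi]
  rw [hB1] at hB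
  -- (C) smoothness at (xbar, w)
  have hC := hsmoothS xbar w hz_bar hz_w
  have hC1 : ⟪gradient f xbar, w - xbar⟫ = 0 := by
    rw [inner_eq_sum']
    apply Finset.sum_eq_zero
    intro i _
    by_cases hi : i ∈ S
    · rw [hgrad_bar i hi]; ring
    · simp [PiLp.sub_apply, hz_w i hi, hz_bar i hi]
  have hC2 : ∑ i ∈ S, d i * (w i - xbar i) ^ 2 = E := by
    rw [hE]
    apply Finset.sum_congr rfl
    intro i hi
    have hdne : d i ≠ 0 := (hd i).ne'
    simp only [hw, WithLp.ofLp_toLp, if_pos hi]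
    field_simp
    ring
  rw [hC1, hC2] at hC
  -- (D) convexity at (xk, w)
  have hD := convex_grad_le hf hconv xk w
  have hD1 : ⟪g, w - xk⟫ = -K + E := by
    rw [inner_eq_sum']
    rw [← Finset.sum_subset (Finset.subset_univ S)
      (fun i _ hi => by simp [PiLp.sub_apply, hz_k i hi, hz_w i hi])]
    rw [hK, hE, ← Finset.sum_neg_distrib, ← Finset.sum_add_distrib]
    apply Finset.sum_congr rfl
    intro i hi
    have hdne : d i ≠ 0 := (hd i).ne'
    simp only [PiLp.sub_apply, hw, WithLp.ofLp_toLp, if_pos hi]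
    field_simp
    ring
  rw [hD1] at hD
  -- key inequality : E ≤ K
  have hkey : E ≤ K := by linarith
  refine ⟨part1, ?_⟩
  have hfinal : ∑ i ∈ S, d i * (xk1 i - xbar i) ^ 2
      = ∑ i ∈ S, d i * (xk i - xbar i) ^ 2 - 2 * K + E := by
    rw [hK, hE, Finset.mul_sum, ← Finset.sum_sub_distrib, ← Finset.sum_add_distrib]
    apply Finset.sum_congr rfl
    intro i hi
    have hdne : d i ≠ 0 := (hd i).ne'
    rw [part1 i hi]
    field_simp
    ring
  rw [hfinal]
  linarith
end

section
/- Let x ∈ C_s be a CW-minimum of f (i.e. if ‖x‖₀ < s then f(x) = min_t f(x + t e_i) for every i; if ‖x‖₀ = s then f(x) ≤ min_t f(x − x_i e_i + t e_j) for every i in the support of x and every j). Then for any separable strictly convex kernel h(x) = Σᵢ hᵢ(xᵢ) relative to which f is L_h-smooth, x is L_h-Bregman stationary: x minimizes ⟨∇f(x), y−x⟩ + L_h D_h(y,x) over y ∈ C_s. -/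
open scoped RealInnerProductSpace

/-- tangent line inequality for convex functions on `ℝ`. -/
lemma convex_tangent_le {φ : ℝ → ℝ} (hφ : ConvexOn ℝ Set.univ φ) {a b m : ℝ}
    (hd : HasDerivAt φ m a) : φ a + m * (b - a) ≤ φ b := by
  rcases lt_trichotomy a b with h | h | h
  · have := hφ.le_slope_of_hasDerivAt (Set.mem_univ a) (Set.mem_univ b) h hd
    rw [slope_def_field, le_div_iff₀ (by linarith)] at this
    linarith
  · simp [h]
  · have := hφ.slope_le_of_hasDerivAt (Set.mem_univ b) (Set.mem_univ a) h hd
    rw [slope_def_field, div_le_iff₀ (by linarith)] at this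
    linarith

/-- directional derivative along a line. -/
lemma hasDerivAt_line {n : ℕ} (f : EuclideanSpace ℝ (Fin n) → ℝ) (hf : ContDiff ℝ 1 f)
    (u d : EuclideanSpace ℝ (Fin n)) :
    HasDerivAt (fun t : ℝ => f (u + t • d)) ⟪gradient f u, d⟫ 0 := by
  have hline : HasDerivAt (fun t : ℝ => u + t • d) d 0 := by
    simpa using ((hasDerivAt_id (0:ℝ)).smul_const d).const_add u
  have hfd : HasFDerivAt f (fderiv ℝ f u) ((fun t : ℝ => u + t • d) 0) := by
    simpa using (hf.differentiable one_ne_zero u).hasFDerivAt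
  have hcomp : HasDerivAt (fun t : ℝ => f (u + t • d)) (fderiv ℝ f u d) 0 := by
    exact hfd.comp_hasDerivAt 0 hline
  convert hcomp using 1
  exact InnerProductSpace.toDual_symm_apply

/-- descent lemma relative to the separable kernel. -/
lemma descent_lemma_s13 {n : ℕ} (f : EuclideanSpace ℝ (Fin n) → ℝ) (hf : ContDiff ℝ 1 f)
    (hi : Fin n → ℝ → ℝ) (hidiff : ∀ i, ContDiff ℝ 1 (hi i)) (Lh : ℝ)
    (hrel : ConvexOn ℝ Set.univ (fun x => Lh * (∑ i, hi i (x i)) - f x))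
    (u d : EuclideanSpace ℝ (Fin n)) :
    f (u + d) ≤ f u + ⟪gradient f u, d⟫
      + Lh * ∑ i, (hi i (u i + d i) - hi i (u i) - deriv (hi i) (u i) * d i) := by
  set q : ℝ → ℝ := fun t => Lh * (∑ i, hi i ((u + t • d) i)) - f (u + t • d) with hq
  have hEq : ∀ t : ℝ, (AffineMap.lineMap u (u + d)) t = u + t • d := by
    intro t
    simp [AffineMap.lineMap_apply]
    abel
  have hconv : ConvexOn ℝ Set.univ q := by
    have h := hrel.comp_affineMap (AffineMap.lineMap u (u + d))
    have heq2 : ((fun x => Lh * (∑ i, hi i (x i)) - f x) ∘ (AffineMap.lineMap u (u + d))) = q := by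
      funext t
      simp only [Function.comp, hq]
      rw [hEq t]
    rw [heq2] at h
    simpa using h
  have hsum : HasDerivAt (fun t : ℝ => ∑ i, hi i ((u + t • d) i))
      (∑ i, deriv (hi i) (u i) * d i) 0 := by
    have hterm : ∀ i : Fin n, HasDerivAt (fun t : ℝ => hi i ((u + t • d) i))
        (deriv (hi i) (u i) * d i) 0 := by
      intro i
      have h1 : HasDerivAt (fun t : ℝ => u i + t * d i) (d i) 0 := by
        simpa using ((hasDerivAt_id (0:ℝ)).mul_const (d i)).const_add (u i)
      have h2 : HasDerivAt (hi i) (deriv (hi i) (u i)) ((fun t : ℝ => u i + t * d i) 0) := by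
        simpa using ((hidiff i).differentiable one_ne_zero (u i)).hasDerivAt
      have h3 := h2.comp (0:ℝ) h1
      have h4 : (fun t : ℝ => hi i ((u + t • d) i)) = (hi i) ∘ (fun t : ℝ => u i + t * d i) := by
        funext t
        simp [Function.comp, PiLp.add_apply, PiLp.smul_apply, smul_eq_mul]
      rw [h4]
      exact h3
    simpa using HasDerivAt.fun_sum (fun i (_ : i ∈ Finset.univ) => hterm i)
  have hq' : HasDerivAt q (Lh * (∑ i, deriv (hi i) (u i) * d i) - ⟪gradient f u, d⟫) 0 :=
    (hsum.const_mul Lh).sub (hasDerivAt_line f hf u d)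
  have key := convex_tangent_le hconv (b := 1) hq'
  have h0 : q 0 = Lh * (∑ i, hi i (u i)) - f u := by simp [hq]
  have h1 : q 1 = Lh * (∑ i, hi i (u i + d i)) - f (u + d) := by
    simp only [hq, one_smul]
    congr 1
  have hexp : ∑ i, (hi i (u i + d i) - hi i (u i) - deriv (hi i) (u i) * d i)
      = (∑ i, hi i (u i + d i)) - (∑ i, hi i (u i)) - ∑ i, deriv (hi i) (u i) * d i := by
    simp [Finset.sum_sub_distrib]
  rw [h0, h1] at key
  rw [hexp]
  ring_nf
  ring_nf at key
  linarith

/-- a CW-minimum of `f` over the `s`-sparse set is `L_h`-Bregman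
stationary with respect to any separable strictly convex kernel `h(x) = Σᵢ hᵢ(xᵢ)`
relative to which `f` is `L_h`-smooth. -/
theorem cw_minimum_implies_bregman_stationary {n s : ℕ} (hs : 1 ≤ s)
    (f : EuclideanSpace ℝ (Fin n) → ℝ) (hf : ContDiff ℝ 1 f)
    (hfconv : ConvexOn ℝ Set.univ f)
    (hi : Fin n → ℝ → ℝ)
    (hidiff : ∀ i, ContDiff ℝ 1 (hi i))
    (histrict : ∀ i, StrictConvexOn ℝ Set.univ (hi i))
    (Lh : ℝ) (hLh : 0 < Lh)
    (hrel : ConvexOn ℝ Set.univ (fun x => Lh * (∑ i, hi i (x i)) - f x))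
    (x : EuclideanSpace ℝ (Fin n)) (hx : x ∈ sparseSet n s)
    (hcw₁ : (Finset.univ.filter fun i => x i ≠ 0).card < s →
      ∀ i, ∀ t : ℝ, f x ≤ f (x + EuclideanSpace.single i t))
    (hcw₂ : (Finset.univ.filter fun i => x i ≠ 0).card = s →
      ∀ i, x i ≠ 0 → ∀ j, ∀ t : ℝ,
        f x ≤ f (x - EuclideanSpace.single i (x i) + EuclideanSpace.single j t)) :
    ∀ y ∈ sparseSet n s,
      0 ≤ ⟪gradient f x, y - x⟫ +
        Lh * ∑ i, (hi i (y i) - hi i (x i) - deriv (hi i) (x i) * (y i - x i)) := by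
  classical
  intro y hy
  set g : EuclideanSpace ℝ (Fin n) := gradient f x with hgdef
  -- Bregman distances are nonnegative
  have hbreg : ∀ (k : Fin n) (a b : ℝ), 0 ≤ hi k a - hi k b - deriv (hi k) b * (a - b) := by
    intro k a b
    have := convex_tangent_le (φ := hi k) (histrict k).convexOn (a := b) (b := a)
      (((hidiff k).differentiable one_ne_zero b).hasDerivAt)
    linarith
  -- the inner product as a sum
  have hinner : ⟪g, y - x⟫ = ∑ m, g m * (y m - x m) := by
    simp [PiLp.inner_apply, RCLike.inner_apply, conj_trivial]
    exact Finset.sum_congr rfl (fun _ _ => mul_comm _ _)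
  -- coordinatewise minimality implies vanishing partial derivative
  have hsingle : ∀ (k : Fin n) (t : ℝ),
      x + t • EuclideanSpace.single k (1:ℝ) = x + EuclideanSpace.single k t := by
    intro k t
    congr 1
    ext j
    simp [EuclideanSpace.single_apply, mul_ite]
  have hgzero : ∀ k : Fin n, (∀ t, f x ≤ f (x + EuclideanSpace.single k t)) → g k = 0 := by
    intro k hk
    have hder := hasDerivAt_line f hf x (EuclideanSpace.single k 1)
    have hloc : IsLocalMin (fun t : ℝ => f (x + t • EuclideanSpace.single k (1:ℝ))) 0 := by
      apply Filter.Eventually.of_forall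
      intro t
      simp only [hsingle]
      have h0 : x + EuclideanSpace.single k (0:ℝ) = x := by
        ext j
        simp [EuclideanSpace.single_apply]
      rw [h0]
      exact hk t
    have h0 := hloc.hasDerivAt_eq_zero hder
    rw [EuclideanSpace.inner_single_right] at h0
    simpa [hgdef] using h0
  have hx' : (Finset.univ.filter fun i => x i ≠ 0).card ≤ s := hx
  rcases lt_or_eq_of_le hx' with hcard | hcard
  · -- case ‖x‖₀ < s : the gradient vanishes entirely
    have hg0 : ∀ k, g k = 0 := fun k => hgzero k (fun t => hcw₁ hcard k t)
    have hgv : g = 0 := by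
      ext k
      simpa using hg0 k
    rw [hgv, inner_zero_left]
    have : 0 ≤ ∑ m, (hi m (y m) - hi m (x m) - deriv (hi m) (x m) * (y m - x m)) :=
      Finset.sum_nonneg fun m _ => hbreg m (y m) (x m)
    nlinarith
  · -- case ‖x‖₀ = s
    have hsupp : ∀ k, x k ≠ 0 → g k = 0 := by
      intro k hk
      apply hgzero k
      intro t
      have h := hcw₂ hcard k hk k (t + x k)
      have he : x + EuclideanSpace.single k t
          = x - EuclideanSpace.single k (x k) + EuclideanSpace.single k (t + x k) := by
        ext j
        simp only [PiLp.add_apply, PiLp.sub_apply, EuclideanSpace.single_apply]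
        split <;> ring
      rw [he]
      exact h
    -- the swap inequality
    have hswap : ∀ i, x i ≠ 0 → ∀ k, x k = 0 → ∀ t : ℝ,
        0 ≤ g k * t + Lh * ((hi i 0 - hi i (x i) + deriv (hi i) (x i) * (x i))
          + (hi k t - hi k 0 - deriv (hi k) 0 * t)) := by
      intro i hi0 k hk0 t
      have hik : i ≠ k := by rintro rfl; exact hi0 hk0
      set d : EuclideanSpace ℝ (Fin n) :=
        EuclideanSpace.single k t - EuclideanSpace.single i (x i) with hd
      have hxd : x + d = x - EuclideanSpace.single i (x i) + EuclideanSpace.single k t := by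
        rw [hd]; abel
      have h1 := hcw₂ hcard i hi0 k t
      rw [← hxd] at h1
      have h2 := descent_lemma_s13 f hf hi hidiff Lh hrel x d
      have hdi : d i = -(x i) := by
        simp [hd, PiLp.sub_apply, EuclideanSpace.single_apply, hik, hik.symm]
      have hdk : d k = t := by
        simp [hd, PiLp.sub_apply, EuclideanSpace.single_apply, hik, hik.symm]
      have hdo : ∀ m, m ≠ i → m ≠ k → d m = 0 := by
        intro m hmi hmk
        simp [hd, PiLp.sub_apply, EuclideanSpace.single_apply, hmi, hmk]
      have hginner : ⟪g, d⟫ = g k * t := by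
        rw [hd, inner_sub_right, EuclideanSpace.inner_single_right,
          EuclideanSpace.inner_single_right]
        simp [← hgdef, hsupp i hi0, mul_comm]
      have hsum_eq : (∑ m, (hi m (x m + d m) - hi m (x m) - deriv (hi m) (x m) * d m))
          = (hi i (x i + d i) - hi i (x i) - deriv (hi i) (x i) * d i)
            + (hi k (x k + d k) - hi k (x k) - deriv (hi k) (x k) * d k) := by
        rw [← Finset.sum_subset (Finset.subset_univ {i, k})]
        · rw [Finset.sum_pair hik]
        · intro m _ hm
          simp only [Finset.mem_insert, Finset.mem_singleton, not_or] at hm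
          rw [hdo m hm.1 hm.2]
          simp
      rw [hsum_eq, hdi, hdk, hk0] at h2
      have := le_trans h1 h2
      rw [← hgdef] at this
      have hre : hi i (x i + -(x i)) = hi i 0 := by norm_num
      rw [hre] at this
      rw [hginner] at this
      ring_nf at this ⊢
      linarith
    -- rewrite the goal as a single sum
    rw [hinner, Finset.mul_sum, ← Finset.sum_add_distrib]
    set φ : Fin n → ℝ := fun m => g m * (y m - x m)
      + Lh * (hi m (y m) - hi m (x m) - deriv (hi m) (x m) * (y m - x m)) with hφ
    show 0 ≤ ∑ m, φ m
    -- combinatorics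
    set S : Finset (Fin n) := Finset.univ.filter (fun m => x m ≠ 0) with hS
    set A : Finset (Fin n) := Finset.univ.filter (fun m => x m = 0 ∧ y m ≠ 0) with hA
    set B : Finset (Fin n) := S.filter (fun m => y m = 0) with hB
    set C : Finset (Fin n) := S.filter (fun m => ¬ y m = 0) with hC
    have hBC : B.card + C.card = S.card := Finset.card_filter_add_card_filter_not _
    have hT : (Finset.univ.filter (fun m => y m ≠ 0)).card ≤ s := hy
    have hACsub : A ∪ C ⊆ Finset.univ.filter (fun m => y m ≠ 0) := by
      intro m hm
      rcases Finset.mem_union.mp hm with h | h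
      · simp only [hA, Finset.mem_filter] at h ⊢
        exact ⟨h.1, h.2.2⟩
      · simp only [hC, hS, Finset.mem_filter] at h ⊢
        exact ⟨Finset.mem_univ m, h.2⟩
    have hACdisj : Disjoint A C := by
      rw [Finset.disjoint_left]
      intro m hmA hmC
      simp only [hA, Finset.mem_filter] at hmA
      simp only [hC, hS, Finset.mem_filter] at hmC
      exact hmC.1.2 hmA.2.1
    have hAB : A.card ≤ B.card := by
      have h1 : A.card + C.card = (A ∪ C).card := (Finset.card_union_of_disjoint hACdisj).symm
      have h2 : (A ∪ C).card ≤ s := le_trans (Finset.card_le_card hACsub) hT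
      omega
    -- an injection from A to B
    have hcardle : Fintype.card ↥A ≤ Fintype.card ↥B := by
      simpa [Fintype.card_coe] using hAB
    obtain ⟨e⟩ := Function.Embedding.nonempty_of_card_le hcardle
    set ι : Fin n → Fin n := fun m => if h : m ∈ A then ((e ⟨m, h⟩ : ↥B) : Fin n) else m with hι
    have hιB : ∀ m ∈ A, ι m ∈ B := by
      intro m hm
      simp only [hι, dif_pos hm]
      exact (e ⟨m, hm⟩).2
    have hιinj : ∀ a ∈ A, ∀ b ∈ A, ι a = ι b → a = b := by
      intro a ha b hb hab
      simp only [hι, dif_pos ha, dif_pos hb] at hab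
      have := e.injective (Subtype.ext hab)
      exact congrArg Subtype.val this
    -- the "cost" of dropping a coordinate
    set c : Fin n → ℝ := fun m => Lh * (hi m 0 - hi m (x m) + deriv (hi m) (x m) * (x m)) with hc
    have hc_nonneg : ∀ m, 0 ≤ c m := by
      intro m
      apply mul_nonneg hLh.le
      have := hbreg m 0 (x m)
      linarith
    have hφB : ∀ m ∈ B, φ m = c m := by
      intro m hm
      simp only [hB, hS, Finset.mem_filter] at hm
      have hg := hsupp m hm.1.2
      simp only [hφ, hc, hg, hm.2]
      ring
    have hφA : ∀ m ∈ A, -(c (ι m)) ≤ φ m := by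
      intro m hm
      have hmB := hιB m hm
      simp only [hB, hS, Finset.mem_filter] at hmB
      simp only [hA, Finset.mem_filter] at hm
      have := hswap (ι m) hmB.1.2 m hm.2.1 (y m)
      simp only [hφ, hc, hm.2.1]
      ring_nf at this ⊢
      linarith
    have hφrest : ∀ m, m ∉ A ∪ B → 0 ≤ φ m := by
      intro m hm
      rw [Finset.mem_union] at hm
      push_neg at hm
      by_cases hxm : x m = 0
      · have hym : y m = 0 := by
          by_contra hym
          exact hm.1 (by simp [hA, hxm, hym])
        simp [hφ, hxm, hym]
      · have hg := hsupp m hxm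
        have := hbreg m (y m) (x m)
        simp only [hφ, hg]
        nlinarith
    have hABdisj : Disjoint A B := by
      rw [Finset.disjoint_left]
      intro m hmA hmB
      simp only [hA, Finset.mem_filter] at hmA
      simp only [hB, hS, Finset.mem_filter] at hmB
      exact hmB.1.2 hmA.2.1
    have hsplit : ∑ m, φ m = (∑ m ∈ A ∪ B, φ m) + ∑ m ∈ Finset.univ \ (A ∪ B), φ m := by
      rw [← Finset.sum_sdiff (Finset.subset_univ (A ∪ B))]
      ring
    have hrest_nonneg : 0 ≤ ∑ m ∈ Finset.univ \ (A ∪ B), φ m := by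
      apply Finset.sum_nonneg
      intro m hm
      exact hφrest m (Finset.mem_sdiff.mp hm).2
    have hAB_sum : ∑ m ∈ A ∪ B, φ m = (∑ m ∈ A, φ m) + ∑ m ∈ B, φ m :=
      Finset.sum_union hABdisj
    have hBsum : ∑ m ∈ B, φ m = ∑ m ∈ B, c m := Finset.sum_congr rfl hφB
    have hAsum : -(∑ m ∈ A, c (ι m)) ≤ ∑ m ∈ A, φ m := by
      rw [← Finset.sum_neg_distrib]
      exact Finset.sum_le_sum fun m hm => hφA m hm
    have himage : ∑ m ∈ A, c (ι m) = ∑ b ∈ A.image ι, c b :=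
      (Finset.sum_image hιinj).symm
    have himsub : A.image ι ⊆ B := Finset.image_subset_iff.mpr hιB
    have hle : ∑ b ∈ A.image ι, c b ≤ ∑ b ∈ B, c b :=
      Finset.sum_le_sum_of_subset_of_nonneg himsub (fun b _ _ => hc_nonneg b)
    rw [hsplit, hAB_sum, hBsum]
    have : -(∑ b ∈ B, c b) ≤ ∑ m ∈ A, φ m := by
      rw [himage] at hAsum
      linarith
    linarith
end

section
/- Let h(x) = Σᵢ hᵢ(xᵢ) be separable, strictly convex, supercoercive, continuously differentiable with hᵢ(0) = 0, and let f be such that L_h h − f is convex. Let x ∈ C_s with ‖x‖₀ = s and let L ≥ L_h. Then x is L-Bregman stationary if and only if ∇ᵢf(x) = 0 for all i in the support of x, and min_{i ∈ I_1(x)} hᵢ*(hᵢ'(xᵢ)) ≥ max_{j ∈ I_0(x)} hⱼ*(hⱼ'(0) − ∇ⱼf(x)/L), where hᵢ* is the Fenchel conjugate of hᵢ. -/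
open scoped RealInnerProductSpace

/-- The Fenchel conjugate of a real function. -/
noncomputable def fenchel (φ : ℝ → ℝ) (y : ℝ) : ℝ :=
  sSup (Set.range fun t => y * t - φ t)

/-- Gradient inequality for differentiable convex functions on the line. -/
lemma grad_ineq_s17 {φ : ℝ → ℝ} (hc : ConvexOn ℝ Set.univ φ)
    (hd : Differentiable ℝ φ) (t u : ℝ) :
    deriv φ t * (u - t) ≤ φ u - φ t := by
  rcases lt_trichotomy t u with h | h | h
  · have h1 := hc.deriv_le_slope (Set.mem_univ t) (Set.mem_univ u) h (hd t)
    rw [slope_def_field] at h1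
    have h2 : (0:ℝ) < u - t := by linarith
    have := (le_div_iff₀ h2).mp h1
    linarith
  · simp [h]
  · have h1 := hc.slope_le_deriv (Set.mem_univ u) (Set.mem_univ t) h (hd t)
    rw [slope_def_field] at h1
    have h2 : (0:ℝ) < t - u := by linarith
    have := (div_le_iff₀ h2).mp h1
    nlinarith

/-- The Fenchel conjugate at the derivative is attained at the base point. -/
lemma fenchel_deriv {φ : ℝ → ℝ} (hc : ConvexOn ℝ Set.univ φ)
    (hd : Differentiable ℝ φ) (t : ℝ) :
    fenchel φ (deriv φ t) = deriv φ t * t - φ t := by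
  apply IsGreatest.csSup_eq
  constructor
  · exact ⟨t, rfl⟩
  · rintro _ ⟨u, rfl⟩
    show deriv φ t * u - φ u ≤ _
    have := grad_ineq_s17 hc hd t u
    have h2 : deriv φ t * (u - t) = deriv φ t * u - deriv φ t * t := by ring
    linarith

lemma fenchel_bddAbove {φ : ℝ → ℝ} (hcont : Continuous φ)
    (hco : Filter.Tendsto (fun t => φ t / |t|) (Filter.cocompact ℝ) Filter.atTop) (y : ℝ) :
    BddAbove (Set.range fun t => y * t - φ t) := by
  have hev : ∀ᶠ t in Filter.cocompact ℝ, |y| + 1 ≤ φ t / |t| :=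
    hco.eventually (Filter.eventually_ge_atTop (|y| + 1))
  rw [Filter.hasBasis_cocompact.eventually_iff] at hev
  obtain ⟨K, hK, hKb⟩ := hev
  obtain ⟨M, hM⟩ := (hK.image (Continuous.sub (continuous_const.mul continuous_id) hcont)).bddAbove
  refine ⟨max M 0, ?_⟩
  rintro _ ⟨t, rfl⟩
  by_cases ht : t ∈ K
  · exact le_max_of_le_left (hM ⟨t, ht, rfl⟩)
  · have hb := hKb (show t ∈ Kᶜ by simpa using ht)
    rcases eq_or_ne t 0 with rfl | ht0
    · simp at hb
      nlinarith [abs_nonneg y]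
    · have habs : (0:ℝ) < |t| := abs_pos.mpr ht0
      have : (|y| + 1) * |t| ≤ φ t := by
        have := (le_div_iff₀ habs).mp hb
        linarith
      have hyt : y * t ≤ |y| * |t| := by
        calc y * t ≤ |y * t| := le_abs_self _
        _ = |y| * |t| := abs_mul y t
      refine le_max_of_le_right ?_
      have hexp : (|y| + 1) * |t| = |y| * |t| + |t| := by ring
      show y * t - φ t ≤ 0
      linarith

lemma le_fenchel {φ : ℝ → ℝ} (hcont : Continuous φ)
    (hco : Filter.Tendsto (fun t => φ t / |t|) (Filter.cocompact ℝ) Filter.atTop) (y t : ℝ) :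
    y * t - φ t ≤ fenchel φ y :=
  le_csSup (fenchel_bddAbove hcont hco y) ⟨t, rfl⟩

lemma fenchel_le {φ : ℝ → ℝ} {y c : ℝ} (h : ∀ t, y * t - φ t ≤ c) :
    fenchel φ y ≤ c :=
  csSup_le (Set.range_nonempty _) (by rintro _ ⟨t, rfl⟩; exact h t)

/-- characterization of `L`-Bregman stationarity for a separable,
strictly convex, supercoercive kernel `h(x) = Σᵢ hᵢ(xᵢ)` with `hᵢ(0) = 0`, for points
of full sparsity `‖x‖₀ = s`: `x` is `L`-Bregman stationary iff the gradient vanishes on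
the support of `x` and
`min_{i ∈ I₁(x)} hᵢ*(hᵢ'(xᵢ)) ≥ max_{j ∈ I₀(x)} hⱼ*(hⱼ'(0) − ∇ⱼf(x)/L)`. -/
theorem bregman_stationarity_characterization {n s : ℕ}
    (f : EuclideanSpace ℝ (Fin n) → ℝ) (hf : ContDiff ℝ 1 f)
    (hfconv : ConvexOn ℝ Set.univ f)
    (hi : Fin n → ℝ → ℝ)
    (hidiff : ∀ i, ContDiff ℝ 1 (hi i))
    (histrict : ∀ i, StrictConvexOn ℝ Set.univ (hi i))
    (hicoercive : ∀ i, Filter.Tendsto (fun t => hi i t / |t|)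
      (Filter.cocompact ℝ) Filter.atTop)
    (hizero : ∀ i, hi i 0 = 0)
    (Lh L : ℝ) (hLh : 0 < Lh) (hL : Lh ≤ L)
    (hrel : ConvexOn ℝ Set.univ (fun x => Lh * (∑ i, hi i (x i)) - f x))
    (x : EuclideanSpace ℝ (Fin n))
    (hx : (Finset.univ.filter fun i => x i ≠ 0).card = s) :
    (∀ y ∈ sparseSet n s,
        0 ≤ ⟪gradient f x, y - x⟫ +
          L * ∑ i, (hi i (y i) - hi i (x i) - deriv (hi i) (x i) * (y i - x i))) ↔
      ((∀ i, x i ≠ 0 → gradient f x i = 0) ∧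
       ∀ i, x i ≠ 0 → ∀ j, x j = 0 →
          fenchel (hi j) (deriv (hi j) 0 - gradient f x j / L) ≤
          fenchel (hi i) (deriv (hi i) (x i))) := by
  classical
  set g := gradient f x with hg
  have hLpos : 0 < L := lt_of_lt_of_le hLh hL
  have hconv : ∀ i, ConvexOn ℝ Set.univ (hi i) := fun i => (histrict i).convexOn
  have hdiff : ∀ i, Differentiable ℝ (hi i) := fun i => (hidiff i).differentiable one_ne_zero
  have hcont : ∀ i, Continuous (hi i) := fun i => (hdiff i).continuous
  have hinner : ∀ y : EuclideanSpace ℝ (Fin n), ⟪g, y - x⟫ = ∑ i, g i * (y i - x i) := by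
    intro y
    rw [PiLp.inner_apply]
    simp [RCLike.inner_apply, PiLp.sub_apply]
    exact Finset.sum_congr rfl (fun i _ => mul_comm _ _)
  constructor
  · intro hstat
    have hgrad : ∀ i, x i ≠ 0 → g i = 0 := by
      intro i0 hi0
      have key : ∀ t : ℝ, 0 ≤ g i0 * t +
          L * (hi i0 (x i0 + t) - hi i0 (x i0) - deriv (hi i0) (x i0) * t) := by
        intro t
        set y : EuclideanSpace ℝ (Fin n) := WithLp.toLp 2 (Function.update x i0 (x i0 + t)) with hy
        have hymem : y ∈ sparseSet n s := by
          refine le_trans (Finset.card_le_card ?_) hx.le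
          intro j hj
          simp only [Finset.mem_filter, Finset.mem_univ, true_and] at hj ⊢
          rcases eq_or_ne j i0 with rfl | hji
          · exact hi0
          · simpa [hy, Function.update_of_ne hji] using hj
        have h := hstat y hymem
        rw [hinner] at h
        have hsum1 : ∑ i, g i * (y i - x i) = g i0 * t := by
          rw [Finset.sum_eq_single i0]
          · simp [hy]
          · intro j _ hj; simp [hy, Function.update_of_ne hj]
          · simp
        have hsum2 : ∑ i, (hi i (y i) - hi i (x i) - deriv (hi i) (x i) * (y i - x i)) =
            hi i0 (x i0 + t) - hi i0 (x i0) - deriv (hi i0) (x i0) * t := by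
          rw [Finset.sum_eq_single i0]
          · simp [hy]
          · intro j _ hj; simp [hy, Function.update_of_ne hj]
          · simp
        rw [hsum1, hsum2] at h
        exact h
      set ψ : ℝ → ℝ := fun t => g i0 * t +
          L * (hi i0 (x i0 + t) - hi i0 (x i0) - deriv (hi i0) (x i0) * t) with hψ
      have hψ0 : ψ 0 = 0 := by simp [hψ]
      have hmin : IsLocalMin ψ 0 := by
        apply Filter.Eventually.of_forall
        intro t
        rw [hψ0]
        exact key t
      have h1 : HasDerivAt (fun t : ℝ => hi i0 (x i0 + t)) (deriv (hi i0) (x i0)) 0 := by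
        have h2 : HasDerivAt (hi i0) (deriv (hi i0) (x i0)) (x i0 + 0) := by
          simpa using ((hdiff i0) (x i0)).hasDerivAt
        have h3 : HasDerivAt (fun t : ℝ => x i0 + t) 1 0 := by
          simpa using (hasDerivAt_id (0:ℝ)).const_add (x i0)
        have h4 := h2.comp 0 h3
        rw [mul_one] at h4
        exact h4
      have hDer : HasDerivAt ψ
          (g i0 * 1 + L * (deriv (hi i0) (x i0) - deriv (hi i0) (x i0) * 1)) 0 := by
        exact ((hasDerivAt_id (0:ℝ)).const_mul (g i0)).add
          ((((h1.sub_const (hi i0 (x i0))).sub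
            ((hasDerivAt_id (0:ℝ)).const_mul (deriv (hi i0) (x i0)))).const_mul L))
      have h0 := hmin.deriv_eq_zero
      rw [hDer.deriv] at h0
      simpa using h0
    refine ⟨hgrad, ?_⟩
    intro i0 hi0 j0 hj0
    have hji : j0 ≠ i0 := by rintro rfl; exact hi0 hj0
    have hF : fenchel (hi i0) (deriv (hi i0) (x i0)) =
        deriv (hi i0) (x i0) * x i0 - hi i0 (x i0) := fenchel_deriv (hconv i0) (hdiff i0) (x i0)
    apply fenchel_le
    intro t
    set y : EuclideanSpace ℝ (Fin n) := WithLp.toLp 2 (Function.update (Function.update x i0 0) j0 t) with hy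
    have hyj0 : y j0 = t := by simp [hy]
    have hyi0 : y i0 = 0 := by
      simp [hy, Function.update_of_ne hji.symm]
    have hyk : ∀ k, k ≠ i0 → k ≠ j0 → y k = x k := by
      intro k h1 h2
      simp [hy, Function.update_of_ne h2, Function.update_of_ne h1]
    have hymem : y ∈ sparseSet n s := by
      have hsub : (Finset.univ.filter fun k => y k ≠ 0) ⊆
          insert j0 ((Finset.univ.filter fun k => x k ≠ 0).erase i0) := by
        intro k hk
        simp only [Finset.mem_filter, Finset.mem_univ, true_and] at hk
        rcases eq_or_ne k j0 with rfl | hk1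
        · exact Finset.mem_insert_self _ _
        · rcases eq_or_ne k i0 with rfl | hk2
          · exact absurd hyi0 hk
          · refine Finset.mem_insert_of_mem (Finset.mem_erase.mpr ⟨hk2, ?_⟩)
            simp only [Finset.mem_filter, Finset.mem_univ, true_and]
            rw [← hyk k hk2 hk1]
            exact hk
      have h1 := Finset.card_le_card hsub
      have h2 := Finset.card_insert_le j0 ((Finset.univ.filter fun k => x k ≠ 0).erase i0)
      have h3 : i0 ∈ Finset.univ.filter fun k => x k ≠ 0 := by simp [hi0]
      have h4 := Finset.card_erase_of_mem h3
      have h5 : 0 < (Finset.univ.filter fun k => x k ≠ 0).card := Finset.card_pos.mpr ⟨i0, h3⟩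
      show (Finset.univ.filter fun k => y k ≠ 0).card ≤ s
      omega
    have h := hstat y hymem
    rw [hinner] at h
    have hpairmem : i0 ∈ ({i0, j0} : Finset (Fin n)) := by simp
    have hcol : ∀ F : Fin n → ℝ, (∀ k, k ≠ i0 → k ≠ j0 → F k = 0) →
        ∑ k, F k = F i0 + F j0 := by
      intro F hF0
      rw [← Finset.sum_subset (Finset.subset_univ ({i0, j0} : Finset (Fin n)))]
      · exact Finset.sum_pair (Ne.symm hji)
      · intro k _ hk
        simp only [Finset.mem_insert, Finset.mem_singleton] at hk
        push_neg at hk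
        exact hF0 k hk.1 hk.2
    have hsum1 : ∑ k, g k * (y k - x k) = g i0 * (0 - x i0) + g j0 * (t - x j0) := by
      rw [hcol _ (fun k h1 h2 => by rw [hyk k h1 h2]; ring), hyi0, hyj0]
    have hsum2 : ∑ k, (hi k (y k) - hi k (x k) - deriv (hi k) (x k) * (y k - x k)) =
        (hi i0 0 - hi i0 (x i0) - deriv (hi i0) (x i0) * (0 - x i0)) +
        (hi j0 t - hi j0 (x j0) - deriv (hi j0) (x j0) * (t - x j0)) := by
      rw [hcol _ (fun k h1 h2 => by rw [hyk k h1 h2]; ring), hyi0, hyj0]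
    rw [hsum1, hsum2, hgrad i0 hi0, hj0, hizero i0, hizero j0] at h
    rw [hF]
    -- h : 0 ≤ 0 * (0 - x i0) + g j0 * (t - 0) + L * ((0 - hi i0 (x i0) - d_i*(0 - x i0)) + (hi j0 t - 0 - d_j*(t-0)))
    have hgoal : L * ((deriv (hi j0) 0 - g j0 / L) * t - hi j0 t) ≤
        L * (deriv (hi i0) (x i0) * x i0 - hi i0 (x i0)) := by
      have hexp : L * ((deriv (hi j0) 0 - g j0 / L) * t - hi j0 t) =
          L * (deriv (hi j0) 0 * t) - g j0 * t - L * (hi j0 t) := by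
        field_simp
      have hexp2 : L * ((0 - hi i0 (x i0) - deriv (hi i0) (x i0) * (0 - x i0)) +
          (hi j0 t - 0 - deriv (hi j0) 0 * (t - 0))) =
          L * (deriv (hi i0) (x i0) * x i0) - L * (hi i0 (x i0)) + L * (hi j0 t)
            - L * (deriv (hi j0) 0 * t) := by ring
      have hexp3 : L * (deriv (hi i0) (x i0) * x i0 - hi i0 (x i0)) =
          L * (deriv (hi i0) (x i0) * x i0) - L * (hi i0 (x i0)) := by ring
      rw [hexp, hexp3]
      rw [hexp2] at h
      linarith
    exact le_of_mul_le_mul_left hgoal hLpos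
  · rintro ⟨hgrad, hcomp⟩ y hymem
    rw [hinner y]
    set v : Fin n → ℝ := fun k => g k * (y k - x k) +
        L * (hi k (y k) - hi k (x k) - deriv (hi k) (x k) * (y k - x k)) with hv
    set S := Finset.univ.filter fun k => x k ≠ 0 with hS
    set T := Finset.univ.filter fun k => y k ≠ 0 with hT
    have hvnn : ∀ k, k ∉ T \ S → 0 ≤ v k := by
      intro k hk
      by_cases hxk : x k ≠ 0
      · have hgk : g k = 0 := hgrad k hxk
        have hD := grad_ineq_s17 (hconv k) (hdiff k) (x k) (y k)
        have : 0 ≤ hi k (y k) - hi k (x k) - deriv (hi k) (x k) * (y k - x k) := by linarith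
        simp only [hv, hgk, zero_mul, zero_add]
        exact mul_nonneg hLpos.le this
      · push_neg at hxk
        have hyk : y k = 0 := by
          by_contra hyk
          exact hk (Finset.mem_sdiff.mpr ⟨by simp [hT, hyk], by simp [hS, hxk]⟩)
        simp [hv, hxk, hyk]
    have hTcard : T.card ≤ s := hymem
    have hBA : (T \ S).card ≤ (S \ T).card := by
      have h1 := Finset.card_sdiff_add_card T S
      have h2 := Finset.card_sdiff_add_card S T
      have h3 : (T ∪ S).card = (S ∪ T).card := by rw [Finset.union_comm]
      have hx' : S.card = s := hx
      omega
    obtain ⟨A', hA'sub, hA'card⟩ := Finset.exists_subset_card_eq hBA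
    have e : ((T \ S) : Finset (Fin n)) ≃ (A' : Finset (Fin n)) :=
      Finset.equivOfCardEq hA'card.symm
    set φ : Fin n → Fin n := fun k => if h : k ∈ T \ S then (e ⟨k, h⟩ : Fin n) else k with hφ
    have hφmem : ∀ k ∈ T \ S, φ k ∈ A' := by
      intro k hk
      simp only [hφ, dif_pos hk]
      exact (e ⟨k, hk⟩).2
    have hφinj : ∀ a ∈ T \ S, ∀ b ∈ T \ S, φ a = φ b → a = b := by
      intro a ha b hb hab
      simp only [hφ, dif_pos ha, dif_pos hb] at hab
      have := e.injective (Subtype.coe_injective hab)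
      exact congrArg Subtype.val this
    set B := T \ S with hB
    set A2 := B.image φ with hA2
    have hA2sub : A2 ⊆ S \ T := by
      intro k hk
      obtain ⟨b, hb, rfl⟩ := Finset.mem_image.mp hk
      exact hA'sub (hφmem b hb)
    have hdisj : Disjoint B A2 := by
      refine Finset.disjoint_left.mpr ?_
      intro k hkB hkA
      exact (Finset.mem_sdiff.mp hkB).2 (Finset.mem_sdiff.mp (hA2sub hkA)).1
    have hpair : ∀ j ∈ B, 0 ≤ v j + v (φ j) := by
      intro j hj
      obtain ⟨hjT, hjS⟩ := Finset.mem_sdiff.mp hj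
      have hxj : x j = 0 := by simpa [hS] using hjS
      have hiAmem := Finset.mem_sdiff.mp (hA'sub (hφmem j hj))
      have hxi : x (φ j) ≠ 0 := by simpa [hS] using hiAmem.1
      have hyi : y (φ j) = 0 := by simpa [hT] using hiAmem.2
      have hgi : g (φ j) = 0 := hgrad _ hxi
      have hFi : fenchel (hi (φ j)) (deriv (hi (φ j)) (x (φ j))) =
          deriv (hi (φ j)) (x (φ j)) * x (φ j) - hi (φ j) (x (φ j)) :=
        fenchel_deriv (hconv _) (hdiff _) _
      have hle1 : (deriv (hi j) 0 - g j / L) * y j - hi j (y j) ≤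
          fenchel (hi j) (deriv (hi j) 0 - g j / L) :=
        le_fenchel (hcont j) (hicoercive j) _ _
      have hle2 := hcomp (φ j) hxi j hxj
      rw [hFi] at hle2
      have hmul : L * ((deriv (hi j) 0 - g j / L) * y j - hi j (y j)) ≤
          L * (deriv (hi (φ j)) (x (φ j)) * x (φ j) - hi (φ j) (x (φ j))) :=
        mul_le_mul_of_nonneg_left (le_trans hle1 hle2) hLpos.le
      have hexp : L * ((deriv (hi j) 0 - g j / L) * y j - hi j (y j)) =
          L * (deriv (hi j) 0 * y j) - g j * y j - L * hi j (y j) := by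
        field_simp
      rw [hexp] at hmul
      have hvj : v j = g j * y j + L * (hi j (y j) - deriv (hi j) 0 * y j) := by
        simp only [hv, hxj, hizero j]
        ring
      have hvi : v (φ j) = L * (deriv (hi (φ j)) (x (φ j)) * x (φ j) - hi (φ j) (x (φ j))) := by
        simp only [hv, hgi, hyi, zero_mul, zero_add]
        rw [hizero]
        ring
      rw [hvj, hvi]
      have e2 : L * (hi j (y j) - deriv (hi j) 0 * y j) =
          L * hi j (y j) - L * (deriv (hi j) 0 * y j) := by ring
      rw [e2]
      linarith
    have hstep1 : ∑ k ∈ B ∪ A2, v k ≤ ∑ k, v k := by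
      apply Finset.sum_le_sum_of_subset_of_nonneg (Finset.subset_univ _)
      intro k _ hk
      exact hvnn k (fun hkB => hk (Finset.mem_union_left _ hkB))
    have hstep2 : ∑ k ∈ B ∪ A2, v k = ∑ j ∈ B, (v j + v (φ j)) := by
      rw [Finset.sum_union hdisj, hA2, Finset.sum_image hφinj, ← Finset.sum_add_distrib]
    have hfinal : (0:ℝ) ≤ ∑ k, v k := by
      calc (0:ℝ) ≤ ∑ j ∈ B, (v j + v (φ j)) := Finset.sum_nonneg hpair
      _ = ∑ k ∈ B ∪ A2, v k := hstep2.symm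
      _ ≤ ∑ k, v k := hstep1
    refine le_trans hfinal (le_of_eq ?_)
    rw [hv]
    rw [Finset.sum_add_distrib, ← Finset.mul_sum]
end
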